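/- arXiv:1309.3957 — 11 statements merged into one kernel-verified Lean document; each statement's English description precedes it below -/
import Mathlib

section
/- Let A be a strongly diffusive n×n real matrix. Then at least one of the following holds: (1) the kernel of A contains a nonzero nonnegative vector; (2) the cone generated by the rows of A contains a strictly positive vector; (3) the cone generated by the rows of A contains the entire strictly negative orthant R^n_{<0}. -/
open Finset

section Aux

variable {n : ℕ}

private lemma mulVec_apply' (B : Matrix (Fin n) (Fin n) ℝ) (v : Fin n → ℝ) (j : Fin n) :
    B.mulVec v j = ∑ i, B j i * v i := by
  simp [Matrix.mulVec, dotProduct]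

private lemma sum_smul_rows (A : Matrix (Fin n) (Fin n) ℝ) (c : Fin n → ℝ) (j : Fin n) :
    (∑ i, c i • A i) j = A.transpose.mulVec c j := by
  simp [Matrix.mulVec, dotProduct, Matrix.transpose_apply, Finset.sum_apply, mul_comm]

private lemma max_self_zero (a : ℝ) : max a 0 = a + max (-a) 0 := by
  rcases le_total a 0 with h | h
  · simp [max_eq_right h, max_eq_left (neg_nonneg.mpr h)]
  · simp [max_eq_left h, max_eq_right (neg_nonpos.mpr h)]

/-- positive-part lemma: if `B` is strongly diffusive and `B y ≥ 0` then `B y⁺ ≥ 0`. -/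
private lemma posPart_lemma (B : Matrix (Fin n) (Fin n) ℝ)
    (hdiag : ∀ i, B i i < 0) (hoff : ∀ i j, i ≠ j → 0 < B i j)
    (y : Fin n → ℝ) (hy : ∀ i, 0 ≤ B.mulVec y i) :
    ∀ j, 0 ≤ B.mulVec (fun i => max (y i) 0) j := by
  intro j
  by_cases hj : 0 < y j
  · have hsplit : (fun i => max (y i) 0) = y + fun i => max (-(y i)) 0 := by
      funext i; exact max_self_zero (y i)
    rw [hsplit, Matrix.mulVec_add, Pi.add_apply]
    have h2 : 0 ≤ B.mulVec (fun i => max (-(y i)) 0) j := by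
      rw [mulVec_apply' ]
      refine Finset.sum_nonneg fun i _ => ?_
      by_cases hij : i = j
      · subst hij
        have : max (-(y i)) 0 = 0 := max_eq_right (by linarith)
        rw [this, mul_zero]
      · exact mul_nonneg (hoff j i (Ne.symm hij)).le (le_max_right _ _)
    linarith [hy j]
  · rw [mulVec_apply']
    refine Finset.sum_nonneg fun i _ => ?_
    by_cases hij : i = j
    · subst hij
      have : max (y i) 0 = 0 := max_eq_right (by linarith)
      rw [this, mul_zero]
    · exact mul_nonneg (hoff j i (Ne.symm hij)).le (le_max_right _ _)

/-- if `B y ≥ 0` and no nonzero nonnegative `u` has `B u ≥ 0`, then `y ≤ 0`. -/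
private lemma le_zero_lemma (B : Matrix (Fin n) (Fin n) ℝ)
    (hdiag : ∀ i, B i i < 0) (hoff : ∀ i j, i ≠ j → 0 < B i j)
    (HB : ¬ ∃ u : Fin n → ℝ, u ≠ 0 ∧ (∀ i, 0 ≤ u i) ∧ ∀ i, 0 ≤ B.mulVec u i)
    (y : Fin n → ℝ) (hBy : ∀ i, 0 ≤ B.mulVec y i) : ∀ i, y i ≤ 0 := by
  intro i
  have hzp := posPart_lemma B hdiag hoff y hBy
  by_contra hyi
  push_neg at hyi
  refine HB ⟨fun k => max (y k) 0, ?_, fun k => le_max_right _ _, hzp⟩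
  intro h0
  have h1 := congrFun h0 i
  simp only [Pi.zero_apply] at h1
  have h2 : 0 < max (y i) 0 := lt_max_of_lt_left hyi
  rw [h1] at h2
  exact lt_irrefl 0 h2

/-- if `B` is strongly diffusive and no nonzero nonnegative `u` has `B u ≥ 0`, then
`B y = 0` implies `y = 0`. -/
private lemma inj_lemma (B : Matrix (Fin n) (Fin n) ℝ)
    (hdiag : ∀ i, B i i < 0) (hoff : ∀ i j, i ≠ j → 0 < B i j)
    (HB : ¬ ∃ u : Fin n → ℝ, u ≠ 0 ∧ (∀ i, 0 ≤ u i) ∧ ∀ i, 0 ≤ B.mulVec u i)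
    (y : Fin n → ℝ) (hy : B.mulVec y = 0) : y = 0 := by
  have h1 : ∀ i, y i ≤ 0 := le_zero_lemma B hdiag hoff HB y
    (fun i => by rw [hy]; exact le_refl 0)
  have h2 : ∀ i, -y i ≤ 0 := le_zero_lemma B hdiag hoff HB (-y)
    (fun i => by rw [Matrix.mulVec_neg, hy]; simp)
  funext i
  simp only [Pi.zero_apply]
  linarith [h1 i, h2 i]

/-- strict improvement: from `u ≥ 0`, `B u ≥ 0`, `B u ≠ 0` produce `w ≥ 0` with `B w > 0`. -/
private lemma improve_lemma (B : Matrix (Fin n) (Fin n) ℝ)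
    (hdiag : ∀ i, B i i < 0) (hoff : ∀ i j, i ≠ j → 0 < B i j)
    (u : Fin n → ℝ) (hu0 : ∀ i, 0 ≤ u i) (hu : ∀ i, 0 ≤ B.mulVec u i)
    (hne : B.mulVec u ≠ 0) :
    ∃ w : Fin n → ℝ, (∀ i, 0 ≤ w i) ∧ ∀ j, 0 < B.mulVec w j := by
  classical
  set w := B.mulVec u with hw
  set q := B.mulVec w with hq
  have hP : (Finset.univ.filter fun j => 0 < w j).Nonempty := by
    obtain ⟨k, hk⟩ := Function.ne_iff.mp hne
    exact ⟨k, Finset.mem_filter.mpr ⟨Finset.mem_univ _, lt_of_le_of_ne (hu k) (Ne.symm hk)⟩⟩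
  set ε := (Finset.univ.filter fun j => 0 < w j).inf' hP (fun j => w j / (|q j| + 1)) with hε
  have hεpos : 0 < ε := by
    rw [hε, Finset.lt_inf'_iff]
    intro j hj
    have := (Finset.mem_filter.mp hj).2
    positivity
  refine ⟨u + ε • w, fun i => by
      have := hu0 i; have := hu i
      simp only [Pi.add_apply, Pi.smul_apply, smul_eq_mul]
      nlinarith, ?_⟩
  intro j
  rw [Matrix.mulVec_add, Matrix.mulVec_smul, Pi.add_apply, Pi.smul_apply, smul_eq_mul, ← hw, ← hq]
  by_cases hj : 0 < w j
  · have hjmem : j ∈ Finset.univ.filter fun j => 0 < w j :=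
      Finset.mem_filter.mpr ⟨Finset.mem_univ _, hj⟩
    have h1 : ε ≤ w j / (|q j| + 1) := Finset.inf'_le _ hjmem
    have h2 : ε * (|q j| + 1) ≤ w j := by
      rw [← le_div_iff₀ (by positivity)]; exact h1
    have h3 : -(|q j|) ≤ q j := neg_abs_le _
    nlinarith [abs_nonneg (q j)]
  · have hwj : w j = 0 := le_antisymm (not_lt.mp hj) (hu j)
    have hqj : 0 < q j := by
      rw [hq, mulVec_apply']
      obtain ⟨k, hk⟩ := hP
      have hk' := (Finset.mem_filter.mp hk).2
      have hkj : k ≠ j := fun h => by rw [h, hwj] at hk'; exact lt_irrefl 0 hk'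
      refine Finset.sum_pos' (fun i _ => ?_) ⟨k, Finset.mem_univ _, mul_pos (hoff j k (Ne.symm hkj)) hk'⟩
      by_cases hij : i = j
      · subst hij; rw [hwj, mul_zero]
      · exact mul_nonneg (hoff j i (Ne.symm hij)).le (hu i)
    rw [hwj]
    have := mul_pos hεpos hqj
    linarith

/-- Farkas-type lemma for strongly diffusive matrices with trivial nonnegative "kernel". -/
private lemma farkas_lemma (B : Matrix (Fin n) (Fin n) ℝ)
    (hdiag : ∀ i, B i i < 0) (hoff : ∀ i j, i ≠ j → 0 < B i j)
    (HB : ¬ ∃ u : Fin n → ℝ, u ≠ 0 ∧ (∀ i, 0 ≤ u i) ∧ ∀ i, 0 ≤ B.mulVec u i)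
    (v : Fin n → ℝ) (hv : ∀ j, v j < 0) :
    ∃ c : Fin n → ℝ, (∀ i, 0 ≤ c i) ∧ B.transpose.mulVec c = v := by
  classical
  -- B is invertible
  have hBunit : IsUnit B := by
    rw [← Matrix.mulVec_injective_iff_isUnit]
    intro x y hxy
    exact sub_eq_zero.mp (inj_lemma B hdiag hoff HB (x - y)
      (by rw [Matrix.mulVec_sub, hxy, sub_self]))
  have hBtdet : IsUnit B.transpose.det := by
    rw [Matrix.det_transpose]
    exact (Matrix.isUnit_iff_isUnit_det B).mp hBunit
  -- the cone generated by the rows of B, inside Euclidean space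
  let H := EuclideanSpace ℝ (Fin n)
  let Tset : Set (Fin n → ℝ) := {x | ∃ c : Fin n → ℝ, (∀ i, 0 ≤ c i) ∧ B.transpose.mulVec c = x}
  have hTset : Tset = (fun x => (B.transpose)⁻¹.mulVec x) ⁻¹' {y | ∀ i, 0 ≤ y i} := by
    ext x
    constructor
    · rintro ⟨c, hc, rfl⟩
      have : (B.transpose)⁻¹.mulVec (B.transpose.mulVec c) = c := by
        rw [Matrix.mulVec_mulVec, Matrix.nonsing_inv_mul _ hBtdet, Matrix.one_mulVec]
      simpa [Set.mem_preimage, this] using hc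
    · intro hx
      refine ⟨(B.transpose)⁻¹.mulVec x, hx, ?_⟩
      rw [Matrix.mulVec_mulVec, Matrix.mul_nonsing_inv _ hBtdet, Matrix.one_mulVec]
  have hTclosed : IsClosed Tset := by
    rw [hTset]
    refine IsClosed.preimage ?_ ?_
    · -- continuity of x ↦ M.mulVec x
      refine continuous_pi fun i => ?_
      simp only [mulVec_apply']
      exact continuous_finset_sum _ fun j _ => Continuous.mul continuous_const (continuous_apply j)
    · have : {y : Fin n → ℝ | ∀ i, 0 ≤ y i} = ⋂ i, {y | 0 ≤ y i} := by
        ext y; simp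
      rw [this]
      exact isClosed_iInter fun i => isClosed_le continuous_const (continuous_apply i)
  -- as a convex cone in Euclidean space
  let K : ProperCone ℝ H :=
    { carrier := {x : H | x.ofLp ∈ Tset}
      add_mem' := by
        rintro x y ⟨c, hc, hcx⟩ ⟨d, hd, hdy⟩
        exact ⟨c + d, fun i => add_nonneg (hc i) (hd i), by
          rw [Matrix.mulVec_add, hcx, hdy]; rfl⟩
      zero_mem' := ⟨0, fun i => le_refl 0, by rw [Matrix.mulVec_zero]; rfl⟩
      smul_mem' := by
        rintro r x ⟨c, hc, hcx⟩
        exact ⟨(r : ℝ) • c, fun i => mul_nonneg r.2 (hc i), by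
          rw [Matrix.mulVec_smul, hcx]; rfl⟩
      isClosed' := hTclosed.preimage (PiLp.continuous_ofLp _ _) }
  by_contra hcon
  have hvK : (WithLp.toLp 2 v : H) ∉ K := by
    intro hvmem
    obtain ⟨c, hc, hceq⟩ := hvmem
    exact hcon ⟨c, hc, hceq⟩
  obtain ⟨y0, hy1, hy2⟩ := ProperCone.hyperplane_separation' K hvK
  set y : Fin n → ℝ := y0.ofLp with hy0def
  -- from hy1 : B y ≥ 0 componentwise
  have hBy : ∀ i, 0 ≤ B.mulVec y i := by
    intro i
    have hmem : (WithLp.toLp 2 (B.transpose.mulVec (Pi.single i 1)) : H) ∈ K :=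
      ⟨Pi.single i 1, fun k => by
        simp only [Pi.single_apply]
        split <;> norm_num, rfl⟩
    have := hy1 _ hmem
    rw [PiLp.inner_apply] at this
    simp only [RCLike.inner_apply, starRingEnd_apply, star_trivial] at this
    calc (0:ℝ) ≤ ∑ j, B.transpose.mulVec (Pi.single i 1) j * y j :=
      le_of_le_of_eq this (Finset.sum_congr rfl fun j _ => mul_comm _ _)
    _ = ∑ j, B i j * y j := by
        refine Finset.sum_congr rfl fun j _ => ?_
        rw [mulVec_apply']
        simp [Pi.single_apply, Matrix.transpose_apply]
    _ = B.mulVec y i := (mulVec_apply' B y i).symm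
  -- so y⁺ = 0, i.e. y ≤ 0
  have hy0 : ∀ i, y i ≤ 0 := le_zero_lemma B hdiag hoff HB y hBy
  -- but then ⟪y, v⟫ ≥ 0, contradiction
  have : 0 ≤ (inner ℝ (WithLp.toLp 2 v : H) y0 : ℝ) := by
    rw [PiLp.inner_apply]
    simp only [RCLike.inner_apply, starRingEnd_apply, star_trivial]
    refine Finset.sum_nonneg fun i _ => ?_
    nlinarith [hy0 i, (hv i).le]
  linarith

end Aux

/-- Convex Rank-Nullity Theorem: for a strongly diffusive square matrix `A`, either the kernel
contains a nonzero nonnegative vector, or the cone of the rows contains a strictly positive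
vector, or the cone of the rows contains the whole strictly negative orthant. -/
theorem stmt1 (n : ℕ) (A : Matrix (Fin n) (Fin n) ℝ)
    (hdiag : ∀ i, A i i < 0) (hoff : ∀ i j, i ≠ j → 0 < A i j) :
    (∃ v : Fin n → ℝ, v ≠ 0 ∧ (∀ i, 0 ≤ v i) ∧ A.mulVec v = 0) ∨
    (∃ c : Fin n → ℝ, (∀ i, 0 ≤ c i) ∧ ∀ j, 0 < (∑ i, c i • A i) j) ∨
    (∀ v : Fin n → ℝ, (∀ j, v j < 0) →
      ∃ c : Fin n → ℝ, (∀ i, 0 ≤ c i) ∧ v = ∑ i, c i • A i) := by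
  classical
  rcases Nat.eq_zero_or_pos n with hn | hn
  · subst hn
    refine Or.inr (Or.inr fun v _ => ⟨0, fun i => le_refl 0, ?_⟩)
    funext j
    exact j.elim0
  have hAt_diag : ∀ i, A.transpose i i < 0 := fun i => hdiag i
  have hAt_off : ∀ i j, i ≠ j → 0 < A.transpose i j := fun i j h => hoff j i (Ne.symm h)
  by_cases Q : ∃ u : Fin n → ℝ, u ≠ 0 ∧ (∀ i, 0 ≤ u i) ∧ ∀ i, 0 ≤ A.mulVec u i
  · obtain ⟨u, hu0, hu1, hu2⟩ := Q
    by_cases hAu : A.mulVec u = 0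
    · exact Or.inl ⟨u, hu0, hu1, hAu⟩
    -- get w ≥ 0 with A w > 0
    obtain ⟨w, hw0, hw1⟩ := improve_lemma A hdiag hoff u hu1 hu2 hAu
    by_cases Q' : ∃ c : Fin n → ℝ, c ≠ 0 ∧ (∀ i, 0 ≤ c i) ∧ ∀ i, 0 ≤ A.transpose.mulVec c i
    · obtain ⟨c, hc0, hc1, hc2⟩ := Q'
      by_cases hAc : A.transpose.mulVec c = 0
      · -- contradiction: 0 = ⟨Aᵀc, w⟩ = ⟨c, Aw⟩ > 0
        exfalso
        have key : ∑ j, A.transpose.mulVec c j * w j = ∑ i, c i * A.mulVec w i := by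
          simp only [mulVec_apply', Matrix.transpose_apply, Finset.sum_mul, Finset.mul_sum]
          rw [Finset.sum_comm]
          refine Finset.sum_congr rfl fun i _ => Finset.sum_congr rfl fun j _ => by ring
        have hzero : ∑ j, A.transpose.mulVec c j * w j = 0 := by
          rw [hAc]; simp
        obtain ⟨k, hk⟩ := Function.ne_iff.mp hc0
        have hpos : 0 < ∑ i, c i * A.mulVec w i := by
          refine Finset.sum_pos' (fun i _ => mul_nonneg (hc1 i) (hw1 i).le)
            ⟨k, Finset.mem_univ _, mul_pos (lt_of_le_of_ne (hc1 k) (Ne.symm hk)) (hw1 k)⟩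
        rw [key] at hzero
        linarith
      · obtain ⟨c', hc'0, hc'1⟩ := improve_lemma A.transpose hAt_diag hAt_off c hc1 hc2 hAc
        refine Or.inr (Or.inl ⟨c', hc'0, fun j => ?_⟩)
        rw [sum_smul_rows]
        exact hc'1 j
    · -- no nonneg c with Aᵀ c ≥ 0 : get kernel vector
      obtain ⟨c, hc0, hc1⟩ := farkas_lemma A.transpose hAt_diag hAt_off Q'
        (-(A.mulVec w)) (fun j => by simpa using hw1 j)
      rw [Matrix.transpose_transpose] at hc1
      refine Or.inl ⟨c + w, ?_, fun i => add_nonneg (hc0 i) (hw0 i), ?_⟩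
      · intro h
        obtain ⟨j⟩ := Fin.pos_iff_nonempty.mp hn
        have hw' : w = 0 := by
          funext i
          have hi := congrFun h i
          simp only [Pi.add_apply, Pi.zero_apply] at hi
          simp only [Pi.zero_apply]
          linarith [hc0 i, hw0 i]
        have := hw1 j
        rw [hw', Matrix.mulVec_zero] at this
        exact lt_irrefl 0 this
      · rw [Matrix.mulVec_add, hc1]
        funext i
        simp
  · refine Or.inr (Or.inr fun v hv => ?_)
    obtain ⟨c, hc0, hc1⟩ := farkas_lemma A hdiag hoff Q v hv
    refine ⟨c, hc0, ?_⟩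
    funext j
    rw [sum_smul_rows]
    exact (congrFun hc1 j).symm
end

section
/- The conclusion of the Convex Rank-Nullity theorem can fail for diffusive matrices that are not strongly diffusive: the 3×3 matrix with rows (-1,0,0), (0,-1,2), (0,1,-1) has trivial kernel, its row cone contains no strictly positive vector, and its row cone contains no strictly negative vector. -/
open Finset

/-- The conclusion of the Convex Rank-Nullity theorem fails for the diffusive (but not strongly
diffusive) matrix with rows (-1,0,0), (0,-1,2), (0,1,-1): trivial kernel, and the row cone
contains no strictly positive and no strictly negative vector. -/
theorem stmt2 :
    let A : Matrix (Fin 3) (Fin 3) ℝ := !![-1, 0, 0; 0, -1, 2; 0, 1, -1]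
    (∀ v : Fin 3 → ℝ, A.mulVec v = 0 → v = 0) ∧
    (¬ ∃ c : Fin 3 → ℝ, (∀ i, 0 ≤ c i) ∧ ∀ j, 0 < (∑ i, c i • A i) j) ∧
    (¬ ∃ c : Fin 3 → ℝ, (∀ i, 0 ≤ c i) ∧ ∀ j, (∑ i, c i • A i) j < 0) := by
  intro A
  refine ⟨?_, ?_, ?_⟩
  · intro v hv
    have h0 := congrFun hv 0
    have h1 := congrFun hv 1
    have h2 := congrFun hv 2
    simp [A, Matrix.mulVec, dotProduct, Fin.sum_univ_three] at h0 h1 h2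
    funext j
    fin_cases j <;> simp <;> linarith
  · rintro ⟨c, hc, hpos⟩
    have h0 := hpos 0
    simp [A, Fin.sum_univ_three, Matrix.vecHead, Matrix.vecTail] at h0
    have := hc 0
    linarith
  · rintro ⟨c, hc, hneg⟩
    have h1 := hneg 1
    have h2 := hneg 2
    simp [A, Fin.sum_univ_three, Matrix.vecHead, Matrix.vecTail] at h1 h2
    have := hc 1
    linarith
end

section
/- Let A be an (n-1)×n strongly diffusive matrix (each row i has a_{ii} < 0 and a_{ij} > 0 for j ≠ i, for i = 1,...,n-1). If the cone generated by the rows of A intersects the nonnegative orthant only in the zero vector, then A has rank n-1. -/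
open Finset

/-- An `n × (n+1)` strongly diffusive matrix whose row cone meets the nonnegative orthant only
at `0` has full rank `n`. -/
theorem stmt3 (n : ℕ) (A : Matrix (Fin n) (Fin (n + 1)) ℝ)
    (hdiag : ∀ i : Fin n, A i i.castSucc < 0)
    (hoff : ∀ (i : Fin n) (j : Fin (n + 1)), j ≠ i.castSucc → 0 < A i j)
    (hcone : ∀ c : Fin n → ℝ, (∀ i, 0 ≤ c i) →
      (∀ j, 0 ≤ (∑ i, c i • A i) j) → (∑ i, c i • A i) = 0) :
    A.rank = n := by
  have hli : LinearIndependent ℝ A := by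
    refine Fintype.linearIndependent_iff.mpr ?_
    intro c hsum
    set p : Fin n → ℝ := fun i => max (c i) 0 with hp
    set m : Fin n → ℝ := fun i => max (-c i) 0 with hm
    have hpnn : ∀ i, 0 ≤ p i := fun i => le_max_right _ _
    have hmnn : ∀ i, 0 ≤ m i := fun i => le_max_right _ _
    have hpm : ∀ i, p i - m i = c i := by
      intro i
      simp only [hp, hm, max_def]
      split_ifs with h1 h2 h2 <;> linarith
    have heq : (∑ i, p i • A i) = ∑ i, m i • A i := by
      have h0 : (∑ i, p i • A i) - ∑ i, m i • A i = 0 := by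
        rw [← Finset.sum_sub_distrib, ← hsum]
        congr 1; funext i; rw [← sub_smul, hpm]
      exact sub_eq_zero.mp h0
    have hvnn : ∀ j, 0 ≤ (∑ i, p i • A i) j := by
      intro j
      by_cases hj : ∃ i₀, p i₀ ≠ 0 ∧ j = i₀.castSucc
      · obtain ⟨i₀, hi₀, rfl⟩ := hj
        have hci₀ : 0 < c i₀ := by
          by_contra h
          exact hi₀ (by simp [hp, max_eq_right (not_lt.mp h)])
        rw [heq]
        simp only [Finset.sum_apply, Pi.smul_apply, smul_eq_mul]
        apply Finset.sum_nonneg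
        intro i _
        rcases eq_or_lt_of_le (hmnn i) with h | h
        · rw [← h]; simp
        · have hci : c i < 0 := by
            by_contra hc
            have : m i = 0 := by simp [hm, max_eq_right]; linarith
            linarith
          have hne : (i₀ : Fin n).castSucc ≠ i.castSucc := by
            intro e
            have : i₀ = i := Fin.castSucc_injective n e
            rw [this] at hci₀; linarith
          exact mul_nonneg (hmnn i) (hoff i i₀.castSucc (Ne.symm (hne ∘ Eq.symm))).le
      · push_neg at hj
        simp only [Finset.sum_apply, Pi.smul_apply, smul_eq_mul]
        apply Finset.sum_nonneg
        intro i _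
        by_cases hpi : p i = 0
        · simp [hpi]
        · exact mul_nonneg (hpnn i) (hoff i j (hj i hpi)).le
    have hz : (∑ i, p i • A i) = 0 := hcone p hpnn hvnn
    have hzm : (∑ i, m i • A i) = 0 := heq ▸ hz
    have hlast : ∀ i : Fin n, 0 < A i (Fin.last n) :=
      fun i => hoff i (Fin.last n) (Fin.castSucc_lt_last i).ne'
    have key : ∀ (d : Fin n → ℝ), (∀ i, 0 ≤ d i) → (∑ i, d i • A i) = 0 →
        ∀ i, d i = 0 := by
      intro d hd hsum0 i
      have h1 : (∑ i, d i * A i (Fin.last n)) = 0 := by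
        have := congrFun hsum0 (Fin.last n)
        simpa [Finset.sum_apply] using this
      have h2 : ∀ i ∈ Finset.univ, 0 ≤ d i * A i (Fin.last n) :=
        fun i _ => mul_nonneg (hd i) (hlast i).le
      have := (Finset.sum_eq_zero_iff_of_nonneg h2).mp h1 i (Finset.mem_univ i)
      rcases mul_eq_zero.mp this with h | h
      · exact h
      · exact absurd h (hlast i).ne'
    intro i
    have := hpm i
    rw [key p hpnn hz i, key m hmnn hzm i] at this
    linarith
  have := LinearIndependent.rank_matrix (M := A) hli
  simpa using this
end

section
/- Let G = (S, R) be a reaction network with stoichiometric matrix Γ (rows indexed by reactions, with row y' - y for each reaction y → y'), and for T ⊆ S let Γ_T be the submatrix of columns in T. Then the following are equivalent: (1) T is critical, i.e., there is no nonzero nonnegative vector w ∈ R^S with supp(w) ⊆ T and wΓᵀ = 0; (2) ker Γ_T ∩ R^T_{≥0} = {0}; (3) every point z ∈ R^S_{≥0} with {i : z_i = 0} = T is critical, i.e., z + H meets the strictly positive orthant, where H is the stoichiometric subspace; (4) there exists such a critical point z with z_i = 0 exactly for i ∈ T. -/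
open Finset

variable {S : Type*} [Fintype S]

/-- A dilution step: apply some reaction `r ∈ R` diluted by a nonnegative vector `w`. -/
def Dilution (R : Finset ((S → ℝ) × (S → ℝ))) (y y' : S → ℝ) : Prop :=
  ∃ r ∈ R, ∃ w : S → ℝ, (∀ i, 0 ≤ w i) ∧ y = r.1 + w ∧ y' = r.2 + w

/-- A reaction pathway: a finite chain of dilutions. -/
def Pathway (R : Finset ((S → ℝ) × (S → ℝ))) : (S → ℝ) → (S → ℝ) → Prop :=
  Relation.ReflTransGen (Dilution R)

def IsSiphon (R : Finset ((S → ℝ) × (S → ℝ))) (T : Set S) : Prop :=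
  ∀ r ∈ R, (∃ i ∈ T, r.2 i ≠ 0) → ∃ i ∈ T, r.1 i ≠ 0

def IsClosedSet (R : Finset ((S → ℝ) × (S → ℝ))) (U : Set S) : Prop :=
  ∀ r ∈ R, (∀ i, r.1 i ≠ 0 → i ∈ U) → ∀ i, r.2 i ≠ 0 → i ∈ U

/-- `T` is critical: no nonzero nonnegative conservation vector supported in `T`. -/
def IsCritical (R : Finset ((S → ℝ) × (S → ℝ))) (T : Set S) : Prop :=
  ¬ ∃ w : S → ℝ, w ≠ 0 ∧ (∀ i, 0 ≤ w i) ∧ (∀ i, w i ≠ 0 → i ∈ T) ∧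
      ∀ r ∈ R, ∑ i, w i * (r.2 i - r.1 i) = 0

def SelfReplicable (R : Finset ((S → ℝ) × (S → ℝ))) (T : Set S) : Prop :=
  ∃ y y', Pathway R y y' ∧ ∀ i ∈ T, y i < y' i

def Drainable (R : Finset ((S → ℝ) × (S → ℝ))) (T : Set S) : Prop :=
  ∃ y y', Pathway R y y' ∧ ∀ i ∈ T, y' i < y i

def PositiveNetwork (R : Finset ((S → ℝ) × (S → ℝ))) : Prop :=
  ∀ r ∈ R, (∀ i, 0 ≤ r.1 i) ∧ (∀ i, 0 ≤ r.2 i)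


/-- The stoichiometric subspace: the span of the reaction vectors. -/
def StoichSubspace (R : Finset ((S → ℝ) × (S → ℝ))) : Submodule ℝ (S → ℝ) :=
  Submodule.span ℝ {v | ∃ r ∈ R, v = r.2 - r.1}

/-- dot product with `w` as a linear map -/
noncomputable def dotLM (w : S → ℝ) : (S → ℝ) →ₗ[ℝ] ℝ where
  toFun v := ∑ i, w i * v i
  map_add' x y := by simp [mul_add, Finset.sum_add_distrib]
  map_smul' c x := by
    simp only [Pi.smul_apply, smul_eq_mul, RingHom.id_apply, Finset.mul_sum]
    exact Finset.sum_congr rfl fun i _ => by ring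

lemma dot_span_zero {w : S → ℝ} {s : Set (S → ℝ)}
    (hw : ∀ v ∈ s, ∑ i, w i * v i = 0) {h : S → ℝ}
    (hh : h ∈ Submodule.span ℝ s) : ∑ i, w i * h i = 0 := by
  have : Submodule.span ℝ s ≤ LinearMap.ker (dotLM w) :=
    Submodule.span_le.mpr fun v hv => hw v hv
  exact this hh

open scoped RealInnerProductSpace in
lemma gordan_aux (s : Set (EuclideanSpace ℝ S)) (T : Set S)
    (hw : ∀ w : EuclideanSpace ℝ S, (∀ i, 0 ≤ w i) → (∀ i, w i ≠ 0 → i ∈ T) →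
      (∀ v ∈ s, ∑ i, w i * v i = 0) → w = 0) :
    ∃ h ∈ Submodule.span ℝ s, ∀ i ∈ T, 0 < h i := by
  classical
  set H : Submodule ℝ (EuclideanSpace ℝ S) := Submodule.span ℝ s with hH
  set A : Set (EuclideanSpace ℝ S) := (fun i => EuclideanSpace.single i (1:ℝ)) '' T with hA
  have hAfin : A.Finite := (Set.toFinite T).image _
  have hsub : convexHull ℝ A ⊆
      {x : EuclideanSpace ℝ S | (∀ i, 0 ≤ x i) ∧ (∀ i, x i ≠ 0 → i ∈ T) ∧ ∑ i, x i = 1} := by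
    apply convexHull_min
    · rintro _ ⟨i, hi, rfl⟩
      dsimp only
      refine ⟨fun j => ?_, fun j hj => ?_, ?_⟩
      · rw [EuclideanSpace.single_apply]; split <;> norm_num
      · rw [EuclideanSpace.single_apply] at hj
        rcases eq_or_ne j i with rfl | hne
        · exact hi
        · simp [hne] at hj
      · simp [EuclideanSpace.single_apply]
    · rintro x ⟨hx1, hx2, hx3⟩ y ⟨hy1, hy2, hy3⟩ a b ha hb hab
      refine ⟨fun i => ?_, fun i hi => ?_, ?_⟩
      · have : (a • x + b • y) i = a * x i + b * y i := rfl
        rw [this]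
        exact add_nonneg (mul_nonneg ha (hx1 i)) (mul_nonneg hb (hy1 i))
      · have : (a • x + b • y) i = a * x i + b * y i := rfl
        rw [this] at hi
        by_contra hT
        have hx0 : x i = 0 := by by_contra h0; exact hT (hx2 i h0)
        have hy0 : y i = 0 := by by_contra h0; exact hT (hy2 i h0)
        simp [hx0, hy0] at hi
      · have : ∀ i, (a • x + b • y) i = a * x i + b * y i := fun i => rfl
        simp only [this, Finset.sum_add_distrib, ← Finset.mul_sum, hx3, hy3]
        linarith
  have hdisj : Disjoint (H.orthogonal : Set (EuclideanSpace ℝ S)) (convexHull ℝ A) := by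
    rw [Set.disjoint_right]
    intro x hxΔ hxH
    obtain ⟨h1, h2, h3⟩ := hsub hxΔ
    have hdot : ∀ v ∈ s, ∑ i, x i * v i = 0 := by
      intro v hv
      have hvH : v ∈ H := Submodule.subset_span hv
      have := (Submodule.mem_orthogonal _ x).mp hxH v hvH
      simp only [PiLp.inner_apply, RCLike.inner_apply, conj_trivial] at this
      rw [Finset.sum_congr rfl fun i _ => mul_comm (x i) (v i)]
      rw [Finset.sum_congr rfl fun i _ => mul_comm (v i) (x i)]; exact this
    have := hw x h1 h2 hdot
    rw [this] at h3
    simp at h3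
  obtain ⟨f, u, v, hfu, huv, hvf⟩ :=
    geometric_hahn_banach_closed_compact (H.orthogonal.convex)
      (H.orthogonal.closed_of_finiteDimensional) (convex_convexHull ℝ A)
      (hAfin.isCompact_convexHull (𝕜 := ℝ)) hdisj
  -- f vanishes on Hᗮ
  have hf0 : ∀ x ∈ H.orthogonal, f x = 0 := by
    intro x hx
    by_contra hfx
    have h1 := hfu (((u + |u| + 1) / f x) • x) (H.orthogonal.smul_mem _ hx)
    rw [map_smul, smul_eq_mul, div_mul_cancel₀ _ hfx] at h1
    have := abs_nonneg u
    linarith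
  have hu0 : 0 < u := by
    have := hfu 0 (Submodule.zero_mem _)
    simpa using this
  set g : EuclideanSpace ℝ S := (InnerProductSpace.toDual ℝ (EuclideanSpace ℝ S)).symm f with hg
  have hgf : ∀ x : EuclideanSpace ℝ S, ⟪g, x⟫ = f x := fun x =>
    InnerProductSpace.toDual_symm_apply
  have hgH : g ∈ H := by
    rw [← Submodule.orthogonal_orthogonal H]
    rw [Submodule.mem_orthogonal]
    intro x hx
    rw [real_inner_comm, hgf]
    exact hf0 x hx
  refine ⟨g, hgH, fun i hi => ?_⟩
  have hmem : EuclideanSpace.single i (1:ℝ) ∈ convexHull ℝ A :=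
    subset_convexHull ℝ A ⟨i, hi, rfl⟩
  have := hvf _ hmem
  rw [← hgf] at this
  have hinner : ⟪g, EuclideanSpace.single i (1:ℝ)⟫ = g i := by
    rw [EuclideanSpace.inner_single_right]; simp
  rw [hinner] at this
  linarith

/-- Equivalent characterizations of criticality: (1) `T` is critical; (2) the kernel of the
stoichiometric submatrix meets the nonnegative orthant only at `0`; (3) every nonnegative
point vanishing exactly on `T` is a critical point; (4) some such point is a critical point. -/
theorem stmt9 (R : Finset ((S → ℝ) × (S → ℝ))) (T : Set S) :
    [ IsCritical R T,
      ∀ v : S → ℝ, (∀ i, 0 ≤ v i) → (∀ i, v i ≠ 0 → i ∈ T) →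
        (∀ r ∈ R, ∑ i, (r.2 i - r.1 i) * v i = 0) → v = 0,
      ∀ z : S → ℝ, (∀ i, 0 ≤ z i) → (∀ i, z i = 0 ↔ i ∈ T) →
        ∃ h ∈ StoichSubspace R, ∀ i, 0 < z i + h i,
      ∃ z : S → ℝ, (∀ i, 0 ≤ z i) ∧ (∀ i, z i = 0 ↔ i ∈ T) ∧
        ∃ h ∈ StoichSubspace R, ∀ i, 0 < z i + h i ].TFAE := by
  classical
  tfae_have 1 → 2
  | h1, v, hv1, hv2, hv3 => by
    by_contra hv0
    exact h1 ⟨v, hv0, hv1, hv2, fun r hr => by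
      rw [Finset.sum_congr rfl fun i _ => mul_comm (v i) (r.2 i - r.1 i)]
      exact hv3 r hr⟩
  tfae_have 2 → 3
  | h2, z, hz1, hz2 => by
    obtain ⟨h, hhmem, hhpos⟩ :=
      gordan_aux (S := S) {v | ∃ r ∈ R, v = r.2 - r.1} T (by
        intro w hw1 hw2 hw3
        refine WithLp.ofLp_injective 2 (h2 w hw1 hw2 fun r hr => ?_)
        have := hw3 (WithLp.toLp 2 (r.2 - r.1)) ⟨r, hr, rfl⟩
        rw [Finset.sum_congr rfl fun i _ => mul_comm (r.2 i - r.1 i) (w i)]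
        simpa [Pi.sub_apply] using this)
    have hhH : h.ofLp ∈ StoichSubspace R := by
      clear hhpos
      induction hhmem using Submodule.span_induction with
      | mem x hx => obtain ⟨r, hr, hxr⟩ := hx; exact Submodule.subset_span ⟨r, hr, hxr⟩
      | zero => rw [WithLp.ofLp_zero]; exact (StoichSubspace R).zero_mem
      | add x y _ _ hx hy => rw [WithLp.ofLp_add]; exact (StoichSubspace R).add_mem hx hy
      | smul a x _ hx => rw [WithLp.ofLp_smul]; exact (StoichSubspace R).smul_mem a hx
    cases isEmpty_or_nonempty S with
    | inl hS => exact ⟨0, (StoichSubspace R).zero_mem, fun i => (IsEmpty.false i).elim⟩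
    | inr hS =>
      set c : S → ℝ := fun i => if h i < 0 then z i / (2 * (-h i)) else 1 with hc
      have hzpos : ∀ i, i ∉ T → 0 < z i := fun i hi =>
        lt_of_le_of_ne (hz1 i) (Ne.symm fun h0 => hi ((hz2 i).mp h0))
      have hcpos : ∀ i, 0 < c i := by
        intro i
        simp only [hc]
        split
        · rename_i hneg
          have hiT : i ∉ T := fun hiT => absurd (hhpos i hiT) (not_lt.mpr hneg.le)
          exact div_pos (hzpos i hiT) (by linarith)
        · norm_num
      set ε : ℝ := Finset.univ.inf' Finset.univ_nonempty c with hε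
      have hεpos : 0 < ε := by
        rw [hε, Finset.lt_inf'_iff]
        exact fun i _ => hcpos i
      have hεle : ∀ i, ε ≤ c i := fun i => Finset.inf'_le c (Finset.mem_univ i)
      refine ⟨ε • h, (StoichSubspace R).smul_mem ε hhH, fun i => ?_⟩
      have happ : (ε • h.ofLp) i = ε * h i := rfl
      rw [happ]
      by_cases hiT : i ∈ T
      · rw [(hz2 i).mpr hiT]
        simpa using mul_pos hεpos (hhpos i hiT)
      · have hz : 0 < z i := hzpos i hiT
        rcases le_or_gt 0 (h i) with hpos | hneg
        · exact add_pos_of_pos_of_nonneg hz (mul_nonneg hεpos.le hpos)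
        · have h1 : ε ≤ z i / (2 * (-h i)) := by
            simpa [hc, hneg] using hεle i
          have h2 : z i / (2 * (-h i)) * h i ≤ ε * h i :=
            mul_le_mul_of_nonpos_right h1 hneg.le
          have h3 : z i / (2 * (-h i)) * h i = -(z i / 2) := by
            field_simp [sub_ne_zero, hneg.ne]
          rw [h3] at h2
          linarith
  tfae_have 3 → 4
  | h3 => by
    set z : S → ℝ := fun i => if i ∈ T then 0 else 1 with hzdef
    have hz1 : ∀ i, 0 ≤ z i := by
      intro i; by_cases hiT : i ∈ T <;> simp [hzdef, hiT]
    have hz2 : ∀ i, z i = 0 ↔ i ∈ T := by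
      intro i; by_cases hiT : i ∈ T <;> simp [hzdef, hiT]
    exact ⟨z, hz1, hz2, h3 z hz1 hz2⟩
  tfae_have 4 → 1
  | ⟨z, hz1, hz2, h, hhmem, hhpos⟩, ⟨w, hw0, hw1, hw2, hw3⟩ => by
    have hdot : ∑ i, w i * h i = 0 := by
      refine dot_span_zero (s := {v | ∃ r ∈ R, v = r.2 - r.1}) ?_ hhmem
      rintro v ⟨r, hr, rfl⟩
      simpa [Pi.sub_apply] using hw3 r hr
    have hterm : ∀ i ∈ Finset.univ, 0 ≤ w i * h i := by
      intro i _
      rcases eq_or_ne (w i) 0 with h0 | h0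
      · simp [h0]
      · have hiT := hw2 i h0
        have : 0 < h i := by
          have := hhpos i
          rwa [(hz2 i).mpr hiT, zero_add] at this
        exact mul_nonneg (hw1 i) this.le
    have hall := (Finset.sum_eq_zero_iff_of_nonneg hterm).mp hdot
    apply hw0
    funext i
    rcases eq_or_ne (w i) 0 with h0 | h0
    · simp [h0]
    · have hiT := hw2 i h0
      have hpos : 0 < h i := by
        have := hhpos i
        rwa [(hz2 i).mpr hiT, zero_add] at this
      have := hall i (Finset.mem_univ i)
      rcases mul_eq_zero.mp this with h' | h'
      · exact absurd h' h0
      · exact absurd h' hpos.ne'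
  tfae_finish
end

section
/- Let G = (S, R) be a positive reaction network and T ⊆ S nonempty. If T is drainable or self-replicable, then T is critical. -/
open Finset

variable {S : Type*} [Fintype S]

lemma inv_pathway (R : Finset ((S → ℝ) × (S → ℝ))) (w : S → ℝ)
    (hw : ∀ r ∈ R, ∑ i, w i * (r.2 i - r.1 i) = 0)
    {y y' : S → ℝ} (hp : Pathway R y y') :
    ∑ i, w i * y' i = ∑ i, w i * y i := by
  induction hp with
  | refl => rfl
  | tail _ hd ih =>
    obtain ⟨r, hr, v, _, rfl, rfl⟩ := hd
    rw [← ih]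
    have := hw r hr
    simp only [Pi.add_apply]
    rw [← sub_eq_zero, ← Finset.sum_sub_distrib]
    rw [← this]
    congr 1; ext i; ring

/-- In a positive reaction network, every nonempty drainable or self-replicable set is
critical. -/
theorem stmt10 (R : Finset ((S → ℝ) × (S → ℝ))) (hpos : PositiveNetwork R)
    (T : Set S) (hT : T.Nonempty) (h : Drainable R T ∨ SelfReplicable R T) :
    IsCritical R T := by
  rintro ⟨w, hw0, hwnn, hwsupp, hwcons⟩
  have hne : ∃ j, w j ≠ 0 := by
    by_contra hc
    push_neg at hc
    exact hw0 (funext hc)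
  obtain ⟨j, hj⟩ := hne
  have hjpos : 0 < w j := lt_of_le_of_ne (hwnn j) (Ne.symm hj)
  rcases h with ⟨y, y', hp, hlt⟩ | ⟨y, y', hp, hlt⟩
  · have hinv := inv_pathway R w hwcons hp
    have hstrict : ∑ i, w i * y' i < ∑ i, w i * y i := by
      apply Finset.sum_lt_sum
      · intro i _
        rcases eq_or_ne (w i) 0 with h0 | h0
        · simp [h0]
        · exact le_of_lt (mul_lt_mul_of_pos_left (hlt i (hwsupp i h0))
            (lt_of_le_of_ne (hwnn i) (Ne.symm h0)))
      · exact ⟨j, Finset.mem_univ j, mul_lt_mul_of_pos_left (hlt j (hwsupp j hj)) hjpos⟩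
    exact absurd hinv (ne_of_lt hstrict)
  · have hinv := inv_pathway R w hwcons hp
    have hstrict : ∑ i, w i * y i < ∑ i, w i * y' i := by
      apply Finset.sum_lt_sum
      · intro i _
        rcases eq_or_ne (w i) 0 with h0 | h0
        · simp [h0]
        · exact le_of_lt (mul_lt_mul_of_pos_left (hlt i (hwsupp i h0))
            (lt_of_le_of_ne (hwnn i) (Ne.symm h0)))
      · exact ⟨j, Finset.mem_univ j, mul_lt_mul_of_pos_left (hlt j (hwsupp j hj)) hjpos⟩
    exact absurd hinv (ne_of_gt hstrict)
end

section
/- Let G = (S, R) be a positive reaction network and let T ⊆ S be a minimal siphon. Then for every i ∈ T, the closure of {i} ∪ (S \ T) is all of S. -/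
open Finset

variable {S : Type*} [Fintype S]

/-- If `T` is a minimal siphon of a positive reaction network, then for every `i ∈ T`, the
closure of `{i} ∪ (S \\ T)` (the intersection of all closed sets containing it) is all of `S`. -/
theorem stmt11 (R : Finset ((S → ℝ) × (S → ℝ))) (hpos : PositiveNetwork R)
    (T : Set S) (hne : T.Nonempty) (hsiphon : IsSiphon R T)
    (hmin : ∀ T' ⊆ T, T'.Nonempty → IsSiphon R T' → T' = T) :
    ∀ i ∈ T, ⋂₀ {C : Set S | IsClosedSet R C ∧ {i} ∪ Tᶜ ⊆ C} = Set.univ := by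
  intro i hi
  ext x
  simp only [Set.mem_sInter, Set.mem_setOf_eq, Set.mem_univ, iff_true]
  rintro C ⟨hC, hsub⟩
  by_contra hx
  -- Cᶜ is a siphon
  have hsiph : IsSiphon R Cᶜ := by
    intro r hr ⟨j, hj, hj2⟩
    by_contra h
    push_neg at h
    exact hj (hC r hr (fun k hk => by
      by_contra hkC
      exact hk (h k hkC)) j hj2)
  have hsubT : Cᶜ ⊆ T := fun j hj => by
    by_contra hjT
    exact hj (hsub (Or.inr hjT))
  have := hmin Cᶜ hsubT ⟨x, hx⟩ hsiph
  have : i ∈ Cᶜ := this ▸ hi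
  exact this (hsub (Or.inl rfl))
end

section
/- Let G = (S, R) be a consistent positive reaction network and let T ⊆ S. If T is self-replicable then T is drainable, and if T is drainable then T is self-replicable. (More precisely: assuming there exist strictly positive rationals a_r with Σ_r a_r (y'_r - y_r) = 0 over all reactions r, T is self-replicable iff there exist nonnegative reals b_r with Σ_r b_r (y'_r - y_r) strictly positive on all coordinates in T, and this holds iff there exist nonnegative reals c_r with Σ_r c_r (y'_r - y_r) strictly negative on all coordinates in T.) -/
open Finset

variable {S : Type*} [Fintype S]

section Aux
variable {ι : Type*}

/-- Lemma 1: realizability of a list of reactions from a big enough state. -/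
lemma pathway_of_list (R : Finset ((S → ℝ) × (S → ℝ))) (hpos : PositiveNetwork R)
    (L : List ((S → ℝ) × (S → ℝ))) (hL : ∀ r ∈ L, r ∈ R) (y : S → ℝ)
    (hy : ∀ i, (L.map Prod.fst).sum i ≤ y i) :
    Pathway R y (y + (L.map fun r => r.2 - r.1).sum) := by
  induction L generalizing y with
  | nil => simp only [List.map_nil, List.sum_nil, add_zero]; exact Relation.ReflTransGen.refl
  | cons r L ih =>
    have hrR : r ∈ R := hL r (by simp)
    have h1 : ∀ i, 0 ≤ r.1 i := (hpos r hrR).1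
    have h2 : ∀ i, 0 ≤ r.2 i := (hpos r hrR).2
    have hrest : ∀ i, 0 ≤ (L.map Prod.fst).sum i := by
      intro i
      have : ∀ g ∈ L.map Prod.fst, (0:S → ℝ) ≤ g := by
        intro g hg
        obtain ⟨s, hs, rfl⟩ := List.mem_map.1 hg
        intro j; exact (hpos s (hL s (List.mem_cons_of_mem _ hs))).1 j
      have := List.sum_nonneg this
      exact this i
    have hy' : ∀ i, r.1 i + (L.map Prod.fst).sum i ≤ y i := by
      intro i; have := hy i; simpa using this
    have hw : ∀ i, 0 ≤ (y - r.1) i := by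
      intro i
      have := hy' i
      have := hrest i
      simp only [Pi.sub_apply]
      linarith [hy' i, hrest i]
    have step : Dilution R y (y + (r.2 - r.1)) := by
      refine ⟨r, hrR, y - r.1, hw, ?_, ?_⟩ <;> funext i <;> simp <;> ring
    have hbd : ∀ i, (L.map Prod.fst).sum i ≤ (y + (r.2 - r.1)) i := by
      intro i
      have := hy' i
      have := h2 i
      simp only [Pi.add_apply, Pi.sub_apply]
      linarith
    have := ih (fun s hs => hL s (List.mem_cons_of_mem _ hs)) _ hbd
    have heq : (y + (r.2 - r.1)) + (L.map fun r => r.2 - r.1).sum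
        = y + ((r::L).map fun r => r.2 - r.1).sum := by
      simp [add_assoc]
    rw [heq] at this
    exact Relation.ReflTransGen.head step this

/-- Lemma 3: realize a natural-number combination as a pathway. -/
lemma pathway_of_nat (R : Finset ((S → ℝ) × (S → ℝ))) (hpos : PositiveNetwork R)
    (n : ((S → ℝ) × (S → ℝ)) → ℕ) :
    ∃ y : S → ℝ, Pathway R y (y + ∑ r ∈ R, n r • (r.2 - r.1)) := by
  classical
  set L := R.toList.flatMap fun r => List.replicate (n r) r with hLdef
  have hL : ∀ r ∈ L, r ∈ R := by
    intro r hr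
    rw [hLdef, List.mem_flatMap] at hr
    obtain ⟨s, hs, hr⟩ := hr
    rw [List.eq_of_mem_replicate hr]
    exact Finset.mem_toList.1 hs
  have hsum : ∀ f : ((S → ℝ) × (S → ℝ)) → (S → ℝ),
      (L.map f).sum = ∑ r ∈ R, n r • f r := by
    intro f
    rw [hLdef, List.map_flatMap, List.flatMap_def, List.sum_flatten, List.map_map]
    have : (List.sum ∘ fun a => List.map f (List.replicate (n a) a)) = fun a => n a • f a := by
      funext r; simp [Function.comp, List.map_replicate, List.sum_replicate]
    rw [this]
    exact Finset.sum_map_toList R _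
  refine ⟨(L.map Prod.fst).sum, ?_⟩
  have := pathway_of_list R hpos L hL _ (fun i => le_refl _)
  rwa [hsum (fun r => r.2 - r.1)] at this

/-- Lemma 4: a pathway's displacement is a nonnegative combination. -/
lemma combo_of_pathway (R : Finset ((S → ℝ) × (S → ℝ))) {y y' : S → ℝ}
    (h : Pathway R y y') :
    ∃ b : ((S → ℝ) × (S → ℝ)) → ℝ, (∀ r, 0 ≤ b r) ∧
      y' - y = ∑ r ∈ R, b r • (r.2 - r.1) := by
  classical
  induction h with
  | refl => exact ⟨0, fun r => le_refl _, by simp⟩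
  | @tail z yf h1 hd ih =>
    obtain ⟨b, hb, hsum⟩ := ih
    obtain ⟨r, hrR, w, hw, hy, hy'⟩ := hd
    refine ⟨fun s => b s + (if s = r then 1 else 0), ?_, ?_⟩
    · intro s
      by_cases h : s = r
      · subst h; have := hb s; simp only []; positivity
      · simpa [h] using hb s
    · have hz : yf - z = r.2 - r.1 := by rw [hy, hy']; abel
      have e1 : ∑ s ∈ R, (b s + (if s = r then 1 else 0)) • (s.2 - s.1)
          = (∑ s ∈ R, b s • (s.2 - s.1)) + ∑ s ∈ R, (if s = r then s.2 - s.1 else 0) := by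
        rw [← Finset.sum_add_distrib]
        congr 1; funext s
        by_cases h : s = r <;> simp [h, add_smul]
      rw [e1, Finset.sum_ite_eq' R r (fun s => s.2 - s.1), if_pos hrR, ← hsum, ← hz]
      abel

/-- Lemma 5: rational approximation of a strictly positive nonnegative combination. -/
lemma rat_approx (R : Finset ι) (v : ι → S → ℝ) (T : Set S)
    (b : ι → ℝ) (hb : ∀ r, 0 ≤ b r) (hpos : ∀ i ∈ T, 0 < (∑ r ∈ R, b r • v r) i) :
    ∃ q : ι → ℚ, (∀ r, 0 ≤ q r) ∧ ∀ i ∈ T, 0 < (∑ r ∈ R, (q r : ℝ) • v r) i := by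
  classical
  by_cases hT : ∃ i, i ∈ T
  case neg =>
    exact ⟨0, fun r => le_refl _, fun i hi => absurd ⟨i, hi⟩ hT⟩
  set f : S → ℝ := ∑ r ∈ R, b r • v r with hf
  set Tf : Finset S := Finset.univ.filter (· ∈ T) with hTf
  have hne : Tf.Nonempty := by
    obtain ⟨i, hi⟩ := hT
    exact ⟨i, by simp [hTf, hi]⟩
  set δ : ℝ := Tf.inf' hne f with hδ
  have hδpos : 0 < δ := by
    apply (Finset.lt_inf'_iff hne).2
    intro i hi
    exact hpos i (by simpa [hTf] using hi)
  set C : ℝ := ∑ r ∈ R, ∑ j, |v r j| with hC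
  have hC0 : 0 ≤ C := Finset.sum_nonneg fun r _ => Finset.sum_nonneg fun j _ => abs_nonneg _
  set ε : ℝ := δ / (C + 1) with hε
  have hεpos : 0 < ε := div_pos hδpos (by linarith)
  have hq : ∀ r : ι, ∃ q : ℚ, b r < (q:ℝ) ∧ (q:ℝ) < b r + ε := by
    intro r; exact exists_rat_btwn (by linarith)
  choose q hq1 hq2 using hq
  refine ⟨q, ?_, ?_⟩
  · intro r
    have : (0:ℝ) < q r := lt_of_le_of_lt (hb r) (hq1 r)
    exact_mod_cast this.le
  · intro i hi
    have hfi : δ ≤ f i := Finset.inf'_le f (by simp [hTf, hi])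
    have key : ∀ r ∈ R, (q r : ℝ) * v r i ≥ b r * v r i - ε * |v r i| := by
      intro r _
      have h1 := hq1 r
      have h2 := hq2 r
      have habs : |((q r:ℝ) - b r) * v r i| ≤ ε * |v r i| := by
        rw [abs_mul]
        apply mul_le_mul_of_nonneg_right _ (abs_nonneg _)
        rw [abs_of_pos (by linarith)]
        linarith
      nlinarith [abs_le.1 habs]
    have hsum : (∑ r ∈ R, (q r : ℝ) • v r) i ≥ f i - ε * ∑ r ∈ R, |v r i| := by
      have e1 : (∑ r ∈ R, (q r : ℝ) • v r) i = ∑ r ∈ R, (q r : ℝ) * v r i := by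
        simp [Finset.sum_apply]
      have e2 : f i = ∑ r ∈ R, b r * v r i := by
        simp [hf, Finset.sum_apply]
      rw [e1, e2, Finset.mul_sum]
      rw [← Finset.sum_sub_distrib]
      exact Finset.sum_le_sum key
    have hCi : ∑ r ∈ R, |v r i| ≤ C := by
      rw [hC]
      apply Finset.sum_le_sum
      intro r _
      exact Finset.single_le_sum (fun j _ => abs_nonneg (v r j)) (Finset.mem_univ i)
    have hεC : ε * ∑ r ∈ R, |v r i| < δ := by
      calc ε * ∑ r ∈ R, |v r i| ≤ ε * C := by
            apply mul_le_mul_of_nonneg_left hCi hεpos.le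
        _ < ε * (C + 1) := by nlinarith
        _ = δ := by rw [hε, div_mul_cancel₀ _ (by linarith : (0:ℝ) < C + 1).ne']
    linarith

/-- Lemma 6: clear denominators. -/
lemma nat_of_rat (R : Finset ι) (q : ι → ℚ) (hq : ∀ r, 0 ≤ q r) :
    ∃ N : ℕ, 0 < N ∧ ∃ n : ι → ℕ, ∀ r ∈ R, (n r : ℚ) = N * q r := by
  classical
  refine ⟨∏ r ∈ R, (q r).den, Finset.prod_pos fun r _ => (q r).pos, ?_⟩
  refine ⟨fun r => ((∏ s ∈ R, (q s).den) / (q r).den) * (q r).num.toNat, ?_⟩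
  intro r hr
  have hdvd : (q r).den ∣ ∏ s ∈ R, (q s).den := Finset.dvd_prod_of_mem _ hr
  have hnum : ((q r).num.toNat : ℤ) = (q r).num :=
    Int.toNat_of_nonneg (Rat.num_nonneg.2 (hq r))
  obtain ⟨k, hk⟩ := hdvd
  have hden : 0 < (q r).den := (q r).pos
  have hk2 : (∏ s ∈ R, (q s).den) / (q r).den = k := by
    rw [hk]; exact Nat.mul_div_cancel_left k hden
  have hmul : ((q r).den : ℚ) * q r = (q r).num := by
    rw [mul_comm, Rat.mul_den_eq_num]
  have hnum' : ((q r).num.toNat : ℚ) = ((q r).num : ℚ) := by exact_mod_cast hnum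
  dsimp only
  rw [hk2, hk]
  push_cast [hnum']
  linear_combination (-(k : ℚ)) * hmul

/-- Negate a nonnegative combination using consistency. -/
lemma neg_combo (R : Finset ι) (a : ι → ℚ) (ha : ∀ r ∈ R, 0 < a r)
    (v : ι → S → ℝ) (hcons : ∑ r ∈ R, (a r : ℝ) • v r = 0)
    (b : ι → ℝ) (hb : ∀ r, 0 ≤ b r) :
    ∃ c : ι → ℝ, (∀ r, 0 ≤ c r) ∧ ∑ r ∈ R, c r • v r = -∑ r ∈ R, b r • v r := by
  classical
  obtain ⟨M, hM⟩ := (R.image fun r => b r / (a r : ℝ)).exists_le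
  set l : ℝ := max M 0 with hl
  refine ⟨fun r => if r ∈ R then l * (a r : ℝ) - b r else 0, ?_, ?_⟩
  · intro r
    by_cases hr : r ∈ R
    · simp only [if_pos hr]
      have har : (0:ℝ) < (a r : ℝ) := by exact_mod_cast ha r hr
      have h1 : b r / (a r : ℝ) ≤ M := hM _ (Finset.mem_image_of_mem _ hr)
      have h2 : b r / (a r : ℝ) ≤ l := le_trans h1 (le_max_left _ _)
      rw [div_le_iff₀ har] at h2
      linarith
    · simp [hr]
  · have e1 : ∑ r ∈ R, (if r ∈ R then l * (a r : ℝ) - b r else 0) • v r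
        = ∑ r ∈ R, ((l * (a r : ℝ)) • v r - b r • v r) := by
      apply Finset.sum_congr rfl
      intro r hr
      rw [if_pos hr, sub_smul]
    rw [e1, Finset.sum_sub_distrib]
    have e2 : ∑ r ∈ R, (l * (a r : ℝ)) • v r = l • ∑ r ∈ R, (a r : ℝ) • v r := by
      rw [Finset.smul_sum]
      apply Finset.sum_congr rfl
      intro r hr
      rw [mul_smul]
    rw [e2, hcons, smul_zero, zero_sub]
end Aux

lemma nat_sum_apply {ι : Type*} (R : Finset ι) (v : ι → S → ℝ) (N : ℕ) (q : ι → ℚ)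
    (n : ι → ℕ) (hn : ∀ r ∈ R, (n r : ℚ) = N * q r) (i : S) :
    (∑ r ∈ R, n r • v r) i = (N : ℝ) * (∑ r ∈ R, (q r : ℝ) • v r) i := by
  have e : ∀ r ∈ R, n r • v r = ((n r : ℝ)) • v r :=
    fun r _ => (Nat.cast_smul_eq_nsmul ℝ (n r) (v r)).symm
  rw [Finset.sum_congr rfl e]
  simp only [Finset.sum_apply, Pi.smul_apply, smul_eq_mul]
  rw [Finset.mul_sum]
  apply Finset.sum_congr rfl
  intro r hr
  have h : ((n r : ℝ)) = (N : ℝ) * (q r : ℝ) := by exact_mod_cast hn r hr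
  rw [h, mul_assoc]


/-- In a consistent positive reaction network, a set is self-replicable iff it is drainable;
combinatorially, there is a nonnegative combination of the reaction vectors strictly positive on
`T` iff there is one strictly negative on `T`. -/
theorem stmt12 (R : Finset ((S → ℝ) × (S → ℝ))) (hpos : PositiveNetwork R)
    (a : ((S → ℝ) × (S → ℝ)) → ℚ) (ha : ∀ r ∈ R, 0 < a r)
    (hcons : ∑ r ∈ R, (a r : ℝ) • (r.2 - r.1) = 0) (T : Set S) :
    (SelfReplicable R T ↔ Drainable R T) ∧
    (SelfReplicable R T ↔
      ∃ b : ((S → ℝ) × (S → ℝ)) → ℝ, (∀ r, 0 ≤ b r) ∧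
        ∀ i ∈ T, 0 < (∑ r ∈ R, b r • (r.2 - r.1)) i) ∧
    ((∃ b : ((S → ℝ) × (S → ℝ)) → ℝ, (∀ r, 0 ≤ b r) ∧
        ∀ i ∈ T, 0 < (∑ r ∈ R, b r • (r.2 - r.1)) i) ↔
      ∃ c : ((S → ℝ) × (S → ℝ)) → ℝ, (∀ r, 0 ≤ c r) ∧
        ∀ i ∈ T, (∑ r ∈ R, c r • (r.2 - r.1)) i < 0) := by
  classical
  have hSR : SelfReplicable R T ↔
      ∃ b : ((S → ℝ) × (S → ℝ)) → ℝ, (∀ r, 0 ≤ b r) ∧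
        ∀ i ∈ T, 0 < (∑ r ∈ R, b r • (r.2 - r.1)) i := by
    constructor
    · rintro ⟨y, y', hpath, hlt⟩
      obtain ⟨b, hb, hsum⟩ := combo_of_pathway R hpath
      refine ⟨b, hb, fun i hi => ?_⟩
      have h := congrFun hsum i
      simp only [Pi.sub_apply] at h
      rw [← h]
      have := hlt i hi
      linarith
    · rintro ⟨b, hb, hbpos⟩
      obtain ⟨q, hq, hqpos⟩ := rat_approx R _ T b hb hbpos
      obtain ⟨N, hN, n, hn⟩ := nat_of_rat R q hq
      obtain ⟨y, hpath⟩ := pathway_of_nat R hpos n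
      refine ⟨y, _, hpath, fun i hi => ?_⟩
      have hd : 0 < (∑ r ∈ R, n r • (r.2 - r.1)) i := by
        rw [nat_sum_apply R _ N q n hn i]
        exact mul_pos (by exact_mod_cast hN) (hqpos i hi)
      simp only [Pi.add_apply]
      linarith
  have hDR : Drainable R T ↔
      ∃ c : ((S → ℝ) × (S → ℝ)) → ℝ, (∀ r, 0 ≤ c r) ∧
        ∀ i ∈ T, (∑ r ∈ R, c r • (r.2 - r.1)) i < 0 := by
    constructor
    · rintro ⟨y, y', hpath, hlt⟩
      obtain ⟨b, hb, hsum⟩ := combo_of_pathway R hpath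
      refine ⟨b, hb, fun i hi => ?_⟩
      have h := congrFun hsum i
      simp only [Pi.sub_apply] at h
      rw [← h]
      have := hlt i hi
      linarith
    · rintro ⟨c, hc, hcneg⟩
      have hpos' : ∀ i ∈ T, 0 < (∑ r ∈ R, c r • (fun r : (S → ℝ) × (S → ℝ) => -(r.2 - r.1)) r) i := by
        intro i hi
        have e : (∑ r ∈ R, c r • (fun r : (S → ℝ) × (S → ℝ) => -(r.2 - r.1)) r)
            = -(∑ r ∈ R, c r • (r.2 - r.1)) := by
          rw [← Finset.sum_neg_distrib]
          exact Finset.sum_congr rfl fun r _ => by rw [smul_neg]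
        rw [e, Pi.neg_apply]
        linarith [hcneg i hi]
      obtain ⟨q, hq, hqpos⟩ := rat_approx R _ T c hc hpos'
      have hqneg : ∀ i ∈ T, (∑ r ∈ R, (q r : ℝ) • (r.2 - r.1)) i < 0 := by
        intro i hi
        have e : (∑ r ∈ R, (q r : ℝ) • (fun r : (S → ℝ) × (S → ℝ) => -(r.2 - r.1)) r)
            = -(∑ r ∈ R, (q r : ℝ) • (r.2 - r.1)) := by
          rw [← Finset.sum_neg_distrib]
          exact Finset.sum_congr rfl fun r _ => by rw [smul_neg]
        have := hqpos i hi
        rw [e, Pi.neg_apply] at this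
        linarith
      obtain ⟨N, hN, n, hn⟩ := nat_of_rat R q hq
      obtain ⟨y, hpath⟩ := pathway_of_nat R hpos n
      refine ⟨y, _, hpath, fun i hi => ?_⟩
      have hd : (∑ r ∈ R, n r • (r.2 - r.1)) i < 0 := by
        rw [nat_sum_apply R _ N q n hn i]
        exact mul_neg_of_pos_of_neg (by exact_mod_cast hN) (hqneg i hi)
      simp only [Pi.add_apply]
      linarith
  have hpn : (∃ b : ((S → ℝ) × (S → ℝ)) → ℝ, (∀ r, 0 ≤ b r) ∧
        ∀ i ∈ T, 0 < (∑ r ∈ R, b r • (r.2 - r.1)) i) ↔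
      ∃ c : ((S → ℝ) × (S → ℝ)) → ℝ, (∀ r, 0 ≤ c r) ∧
        ∀ i ∈ T, (∑ r ∈ R, c r • (r.2 - r.1)) i < 0 := by
    constructor
    · rintro ⟨b, hb, hbp⟩
      obtain ⟨c, hc, hcs⟩ := neg_combo R a ha _ hcons b hb
      refine ⟨c, hc, fun i hi => ?_⟩
      rw [hcs, Pi.neg_apply]
      linarith [hbp i hi]
    · rintro ⟨c, hc, hcn⟩
      obtain ⟨b, hb, hbs⟩ := neg_combo R a ha _ hcons c hc
      refine ⟨b, hb, fun i hi => ?_⟩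
      rw [hbs, Pi.neg_apply]
      linarith [hcn i hi]
  exact ⟨hSR.trans (hpn.trans hDR.symm), hSR, hpn⟩
end

section
/- Let G = (S, R) be a consistent positive reaction network (there exists a strictly positive v with vΓ = 0, Γ the stoichiometric matrix). If T ⊆ S is critical, then T is self-replicable: there exist nonnegative coefficients b_{y→y'} such that Σ b_{y→y'}(y' - y) is strictly positive in every coordinate of T. -/
open Finset

variable {S : Type*} [Fintype S]

/-- In a consistent positive reaction network, every critical set is self-replicable: some
nonnegative combination of the reaction vectors is strictly positive on every coordinate of
`T`. -/
theorem stmt13 (R : Finset ((S → ℝ) × (S → ℝ))) (hpos : PositiveNetwork R)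
    (v : ((S → ℝ) × (S → ℝ)) → ℝ) (hv : ∀ r ∈ R, 0 < v r)
    (hcons : ∑ r ∈ R, v r • (r.2 - r.1) = 0)
    (T : Set S) (hcrit : IsCritical R T) :
    ∃ b : ((S → ℝ) × (S → ℝ)) → ℝ, (∀ r, 0 ≤ b r) ∧
      ∀ i ∈ T, 0 < (∑ r ∈ R, b r • (r.2 - r.1)) i := by
  classical
  let g : ((S → ℝ) × (S → ℝ)) → EuclideanSpace ℝ S :=
    fun r => (WithLp.equiv 2 _).symm (r.2 - r.1)
  have hg : ∀ r : (S → ℝ) × (S → ℝ), ∀ i, g r i = r.2 i - r.1 i := fun r i => rfl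
  have hinner : ∀ x y : EuclideanSpace ℝ S, (inner ℝ x y : ℝ) = ∑ i, x i * y i := by
    intro x y; rw [PiLp.inner_apply]; simp [RCLike.inner_apply]
    exact Finset.sum_congr rfl fun _ _ => mul_comm _ _
  let H : Submodule ℝ (EuclideanSpace ℝ S) := Submodule.span ℝ (g '' ↑R)
  have hgH : ∀ r ∈ R, g r ∈ H := fun r hr => Submodule.subset_span ⟨r, hr, rfl⟩
  -- the simplex on T
  let K : Set (EuclideanSpace ℝ S) :=
    convexHull ℝ ((fun i => EuclideanSpace.single i (1:ℝ)) '' T)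
  -- membership facts for K
  have hK : ∀ k ∈ K, (∀ i, 0 ≤ k i) ∧ (∀ i, k i ≠ 0 → i ∈ T) ∧ ∑ i, k i = 1 := by
    have hsub : K ⊆ {w : EuclideanSpace ℝ S |
        (∀ i, 0 ≤ w i) ∧ (∀ i, w i ≠ 0 → i ∈ T) ∧ ∑ i, w i = 1} := by
      apply convexHull_min
      · rintro w ⟨i, hi, rfl⟩
        refine ⟨fun j => ?_, fun j hj => ?_, ?_⟩
        · simp only [EuclideanSpace.single_apply]; positivity
        · simp only [EuclideanSpace.single_apply] at hj
          by_cases h : j = i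
          · rwa [h]
          · simp [h] at hj
        · simp [EuclideanSpace.single_apply]
      · rintro w1 ⟨h1p, h1s, h1t⟩ w2 ⟨h2p, h2s, h2t⟩ a b ha hb hab
        have happ : ∀ i, (a • w1 + b • w2) i = a * w1 i + b * w2 i := fun i => rfl
        refine ⟨fun i => ?_, fun i hi => ?_, ?_⟩
        · rw [happ]
          exact add_nonneg (mul_nonneg ha (h1p i)) (mul_nonneg hb (h2p i))
        · rw [happ] at hi
          by_cases h1 : w1 i = 0
          · refine h2s i fun h2 => hi ?_
            rw [h1, h2]; ring
          · exact h1s i h1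
        · simp only [happ]
          rw [Finset.sum_add_distrib, ← Finset.mul_sum, ← Finset.mul_sum, h1t, h2t]
          simpa using hab
    exact fun k hk => hsub hk
  -- trivial case : T empty
  rcases T.eq_empty_or_nonempty with hT | ⟨i0, hi0⟩
  · exact ⟨0, fun r => le_refl 0, by simp [hT]⟩
  have hKne : K.Nonempty := ⟨_, subset_convexHull ℝ _ ⟨i0, hi0, rfl⟩⟩
  have hKcomp : IsCompact K := (Set.Finite.image _ (Set.toFinite T)).isCompact_convexHull ℝ
  -- project K onto H
  let f : EuclideanSpace ℝ S →L[ℝ] EuclideanSpace ℝ S :=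
    H.subtypeL.comp (H.orthogonalProjectionOnto)
  have hfH : ∀ z, f z ∈ H := fun z => SetLike.coe_mem _
  have hfperp : ∀ z, z - f z ∈ Hᗮ := fun z => H.sub_starProjection_mem_orthogonal z
  let C : Set (EuclideanSpace ℝ S) := f '' K
  have hCconv : Convex ℝ C := by
    have := (convex_convexHull ℝ ((fun i => EuclideanSpace.single i (1:ℝ)) '' T)).linear_image
      (f : EuclideanSpace ℝ S →ₗ[ℝ] EuclideanSpace ℝ S)
    simpa using this
  have hCcomp : IsCompact C := hKcomp.image f.continuous
  have hCne : C.Nonempty := hKne.image f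
  -- the minimal-norm point of C
  obtain ⟨x, hxC, hxmin⟩ :=
    exists_norm_eq_iInf_of_complete_convex hCne hCcomp.isComplete hCconv 0
  have hlb : ∀ w ∈ C, (inner ℝ x x : ℝ) ≤ inner ℝ x w := by
    intro w hw
    have := (norm_eq_iInf_iff_real_inner_le_zero hCconv hxC).mp hxmin w hw
    have h2 : (inner ℝ (-x) (w - x) : ℝ) ≤ 0 := by simpa using this
    rw [inner_neg_left, inner_sub_right] at h2
    linarith
  -- x is nonzero, else criticality is contradicted
  have hx0 : x ≠ 0 := by
    rintro rfl
    obtain ⟨k, hkK, hfk⟩ := hxC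
    obtain ⟨hkp, hks, hkt⟩ := hK k hkK
    have hkperp : k ∈ Hᗮ := by
      have := hfperp k
      rwa [hfk, sub_zero] at this
    refine hcrit ⟨fun i => k i, ?_, hkp, hks, ?_⟩
    · intro h
      have : ∑ i, k i = 0 := by
        rw [Finset.sum_eq_zero]
        intro i _
        exact congrFun h i
      rw [hkt] at this; norm_num at this
    · intro r hr
      have := (Submodule.mem_orthogonal H k).mp hkperp (g r) (hgH r hr)
      rw [hinner] at this
      simpa [hg, mul_comm] using this
  have hxx : (0:ℝ) < inner ℝ x x := by
    rw [real_inner_self_eq_norm_sq]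
    exact pow_pos (norm_pos_iff.mpr hx0) 2
  have hxH : x ∈ H := by
    obtain ⟨k, _, hfk⟩ := hxC
    rw [← hfk]; exact hfH k
  -- strict positivity of x on T
  have hxpos : ∀ i ∈ T, 0 < x i := by
    intro i hi
    have hsC : f (EuclideanSpace.single i (1:ℝ)) ∈ C :=
      ⟨_, subset_convexHull ℝ _ ⟨i, hi, rfl⟩, rfl⟩
    have h1 : (inner ℝ x x : ℝ) ≤ inner ℝ x (f (EuclideanSpace.single i (1:ℝ))) := hlb _ hsC
    have h2 : (inner ℝ x (EuclideanSpace.single i (1:ℝ) - f (EuclideanSpace.single i (1:ℝ)))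
        : ℝ) = 0 := (Submodule.mem_orthogonal H _).mp (hfperp _) x hxH
    rw [inner_sub_right] at h2
    have h3 : (inner ℝ x (EuclideanSpace.single i (1:ℝ)) : ℝ) = x i := by
      rw [EuclideanSpace.inner_single_right]; simp
    linarith
  -- express x as a combination of reaction vectors
  have hxspan : x ∈ Submodule.span ℝ (Set.range fun r : ↥R => g ↑r) := by
    have : g '' ↑R = Set.range fun r : ↥R => g ↑r := Set.image_eq_range _ _
    rw [← this]; exact hxH
  obtain ⟨c, hc⟩ := (Submodule.mem_span_range_iff_exists_fun ℝ).mp hxspan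
  let e : ((S → ℝ) × (S → ℝ)) → ℝ := fun r => if h : r ∈ R then c ⟨r, h⟩ else 0
  have he : ∑ r ∈ R, e r • g r = x := by
    rw [← Finset.sum_attach R (fun r => e r • g r), ← hc]
    exact Finset.sum_congr rfl fun r _ => by simp [e, r.2]
  -- choose a shift making the coefficients nonnegative
  obtain ⟨t, ht⟩ := Finset.exists_le (R.image fun r => -e r / v r)
  have hbnn : ∀ r ∈ R, 0 ≤ e r + t * v r := by
    intro r hr
    have h1 : -e r / v r ≤ t := ht _ (Finset.mem_image_of_mem _ hr)
    have h2 := (div_le_iff₀ (hv r hr)).mp h1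
    nlinarith
  refine ⟨fun r => if r ∈ R then e r + t * v r else 0, fun r => ?_, fun i hi => ?_⟩
  · by_cases h : r ∈ R
    · simpa [h] using hbnn r h
    · simp [h]
  · -- compute the sum at coordinate i
    have hsum : (∑ r ∈ R, (if r ∈ R then e r + t * v r else 0) • (r.2 - r.1)) i
        = ∑ r ∈ R, (e r + t * v r) * (r.2 i - r.1 i) := by
      rw [Finset.sum_apply]
      exact Finset.sum_congr rfl fun r hr => by simp [hr]
    rw [hsum]
    have hvz : ∑ r ∈ R, v r * (r.2 i - r.1 i) = 0 := by
      have := congrFun hcons i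
      rw [Finset.sum_apply] at this
      simpa using this
    have hei : ∑ r ∈ R, e r * (r.2 i - r.1 i) = x i := by
      have hL : ∑ r ∈ R, e r • ((r.2 - r.1) : S → ℝ)
          = (WithLp.linearEquiv 2 ℝ (S → ℝ)) x := by
        rw [← he, map_sum]
        exact Finset.sum_congr rfl fun r _ => by rw [map_smul]; rfl
      have := congrFun hL i
      rw [Finset.sum_apply] at this
      rw [show (WithLp.linearEquiv 2 ℝ (S → ℝ)) x i = x i from rfl] at this
      rw [← this]
      exact Finset.sum_congr rfl fun r _ => by simp
    have expand : ∑ r ∈ R, (e r + t * v r) * (r.2 i - r.1 i)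
        = (∑ r ∈ R, e r * (r.2 i - r.1 i)) + t * ∑ r ∈ R, v r * (r.2 i - r.1 i) := by
      rw [Finset.mul_sum, ← Finset.sum_add_distrib]
      exact Finset.sum_congr rfl fun r _ => by ring
    rw [expand, hei, hvz, mul_zero, add_zero]
    exact hxpos i hi
end

section
/- Let G = (S, R) be a positive reaction network and T a minimal critical siphon. Then T is drainable or self-replicable. -/
open Finset

variable {S : Type*} [Fintype S]
set_option linter.unusedSectionVars false

/-! ### Dot product -/

/-- Dot product on `S → ℝ`. -/
def dotp (w x : S → ℝ) : ℝ := ∑ i, w i * x i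

lemma dotp_sub_right (w x y : S → ℝ) : dotp w (x - y) = dotp w x - dotp w y := by
  simp [dotp, mul_sub, Finset.sum_sub_distrib]

lemma dotp_add_right (w x y : S → ℝ) : dotp w (x + y) = dotp w x + dotp w y := by
  simp [dotp, mul_add, Finset.sum_add_distrib]

lemma dotp_smul_right (w x : S → ℝ) (t : ℝ) : dotp w (t • x) = t * dotp w x := by
  simp [dotp, Finset.mul_sum]; exact Finset.sum_congr rfl fun i _ => by ring

lemma dotp_zero_right (w : S → ℝ) : dotp w 0 = 0 := by simp [dotp]

lemma dotp_sub_left (w u x : S → ℝ) : dotp (w - u) x = dotp w x - dotp u x := by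
  simp [dotp, sub_mul, Finset.sum_sub_distrib]

lemma dotp_smul_left (w x : S → ℝ) (t : ℝ) : dotp (t • w) x = t * dotp w x := by
  simp [dotp, Finset.mul_sum]; exact Finset.sum_congr rfl fun i _ => by ring

lemma dotp_self_pos {w : S → ℝ} (hw : w ≠ 0) : 0 < dotp w w := by
  obtain ⟨i, hi⟩ := Function.ne_iff.mp hw
  refine Finset.sum_pos' (fun j _ => mul_self_nonneg _) ⟨i, Finset.mem_univ i, ?_⟩
  have : w i ≠ 0 := hi
  exact mul_self_pos.mpr this

/-! ### Finite cones -/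

/-- Membership in the cone generated by a list of vectors. -/
def ConeMem : List (S → ℝ) → (S → ℝ) → Prop
  | [], x => x = 0
  | a :: l, x => ∃ t : ℝ, 0 ≤ t ∧ ConeMem l (x - t • a)

lemma coneMem_dotp_le {w : S → ℝ} :
    ∀ {l : List (S → ℝ)} {x : S → ℝ}, (∀ a ∈ l, dotp w a ≤ 0) → ConeMem l x → dotp w x ≤ 0
  | [], x, _, hx => by rw [show x = 0 from hx, dotp_zero_right]
  | a :: l, x, hl, ⟨t, ht, hx⟩ => by
      have h1 : dotp w (x - t • a) ≤ 0 :=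
        coneMem_dotp_le (fun b hb => hl b (List.mem_cons_of_mem _ hb)) hx
      have h2 : dotp w a ≤ 0 := hl a List.mem_cons_self
      rw [dotp_sub_right, dotp_smul_right] at h1
      nlinarith

lemma coneMem_coord_le {i : S} :
    ∀ {l : List (S → ℝ)} {x : S → ℝ}, (∀ a ∈ l, a i ≤ 0) → ConeMem l x → x i ≤ 0
  | [], x, _, hx => by rw [show x = 0 from hx]; simp
  | a :: l, x, hl, ⟨t, ht, hx⟩ => by
      have h1 : (x - t • a) i ≤ 0 :=
        coneMem_coord_le (fun b hb => hl b (List.mem_cons_of_mem _ hb)) hx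
      have h2 : a i ≤ 0 := hl a List.mem_cons_self
      simp only [Pi.sub_apply, Pi.smul_apply, smul_eq_mul] at h1
      nlinarith

lemma coneMem_append :
    ∀ {l₁ l₂ : List (S → ℝ)} {x : S → ℝ}, ConeMem (l₁ ++ l₂) x →
      ∃ y, ConeMem l₁ y ∧ ConeMem l₂ (x - y)
  | [], l₂, x, hx => ⟨0, rfl, by simpa using hx⟩
  | a :: l₁, l₂, x, ⟨t, ht, hx⟩ => by
      obtain ⟨y, hy1, hy2⟩ := coneMem_append hx
      refine ⟨y + t • a, ⟨t, ht, by simpa using hy1⟩, ?_⟩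
      have : x - (y + t • a) = x - t • a - y := by abel
      rw [this]; exact hy2

lemma coneMem_map_proj (a : S → ℝ) (g : (S → ℝ) → ℝ) :
    ∀ (l : List (S → ℝ)) (x : S → ℝ), ConeMem (l.map fun v => v - g v • a) x →
      ∃ s : ℝ, ConeMem l (x + s • a)
  | [], x, hx => ⟨0, by simpa using hx⟩
  | v :: l, x, ⟨t, ht, hx⟩ => by
      obtain ⟨s, hs⟩ := coneMem_map_proj a g l _ hx
      refine ⟨s + t * g v, t, ht, ?_⟩
      have : x + (s + t * g v) • a - t • v = x - t • (v - g v • a) + s • a := by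
        simp only [smul_sub, smul_smul, add_smul]; abel
      rw [this]; exact hs

/-- Elementary Farkas lemma for finitely generated cones in `S → ℝ`. -/
lemma farkas : ∀ (n : ℕ) (l : List (S → ℝ)), l.length = n → ∀ b : S → ℝ,
    ConeMem l b ∨ ∃ w : S → ℝ, (∀ a ∈ l, dotp w a ≤ 0) ∧ 0 < dotp w b := by
  intro n
  induction n with
  | zero =>
    intro l hl b
    rw [List.length_eq_zero_iff] at hl
    subst hl
    by_cases hb : b = 0
    · exact Or.inl hb
    · exact Or.inr ⟨b, by simp, dotp_self_pos hb⟩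
  | succ n IH =>
    intro l hl b
    by_cases hc : ConeMem l b
    · exact Or.inl hc
    obtain ⟨a, l', rfl⟩ : ∃ a l', l = a :: l' := by
      cases l with
      | nil => simp at hl
      | cons a l' => exact ⟨a, l', rfl⟩
    have hl' : l'.length = n := by simpa using hl
    rcases IH l' hl' b with hb | ⟨w, hw, hwb⟩
    · exact absurd ⟨0, le_refl 0, by simpa using hb⟩ hc
    by_cases ha : dotp w a ≤ 0
    · refine Or.inr ⟨w, ?_, hwb⟩
      intro x hx
      rcases List.mem_cons.mp hx with rfl | hx
      · exact ha
      · exact hw x hx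
    push_neg at ha
    set g : (S → ℝ) → ℝ := fun v => dotp w v / dotp w a with hg
    set π : (S → ℝ) → (S → ℝ) := fun v => v - g v • a with hπ
    have hπdot : ∀ v, dotp w (π v) = 0 := by
      intro v
      rw [hπ]
      simp only [dotp_sub_right, dotp_smul_right, hg]
      field_simp; ring
    rcases IH (l'.map π) (by simpa using hl') (π b) with hb' | ⟨u, hu, hub⟩
    · -- then b is in the cone after all: contradiction
      exfalso
      apply hc
      obtain ⟨s, hs⟩ := coneMem_map_proj a g l' _ hb'
      have hsle : dotp w (π b + s • a) ≤ 0 := coneMem_dotp_le hw hs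
      rw [dotp_add_right, dotp_smul_right, hπdot, zero_add] at hsle
      have hs0 : s ≤ 0 := by nlinarith
      refine ⟨g b - s, ?_, ?_⟩
      · have : 0 < g b := div_pos hwb ha
        linarith
      · have : b - (g b - s) • a = π b + s • a := by
          rw [hπ]; simp only [sub_smul]; abel
        rw [this]; exact hs
    · -- build separating vector for the full list
      refine Or.inr ⟨u - (dotp u a / dotp w a) • w, ?_, ?_⟩
      · intro x hx
        rcases List.mem_cons.mp hx with rfl | hx
        · rw [dotp_sub_left, dotp_smul_left]
          have : dotp u x / dotp w x * dotp w x = dotp u x := by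
            field_simp
          rw [this]; simp
        · have h1 : dotp u (π x) ≤ 0 := hu _ (List.mem_map_of_mem hx)
          rw [dotp_sub_left, dotp_smul_left]
          rw [hπ] at h1
          simp only [dotp_sub_right, dotp_smul_right, hg] at h1
          have hwa : dotp w a ≠ 0 := ne_of_gt ha
          calc dotp u x - dotp u a / dotp w a * dotp w x
              = dotp u x - dotp w x / dotp w a * dotp u a := by ring
            _ ≤ 0 := h1
      · rw [dotp_sub_left, dotp_smul_left]
        rw [hπ] at hub
        simp only [dotp_sub_right, dotp_smul_right, hg] at hub
        calc (0:ℝ) < dotp u b - dotp w b / dotp w a * dotp u a := hub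
          _ = dotp u b - dotp u a / dotp w a * dotp w b := by ring

/-- Extract explicit coefficients from cone membership over a mapped list. -/
lemma coneMem_extract {α : Type*} (f : α → (S → ℝ)) :
    ∀ (l : List α) (y : S → ℝ), ConeMem (l.map f) y →
      ∃ c : Fin l.length → ℝ, (∀ k, 0 ≤ c k) ∧ y = ∑ k, c k • f (l.get k)
  | [], y, hy => ⟨fun k => 0, fun k => le_refl _, by have h0 : y = 0 := hy; simpa using h0⟩
  | a :: l, y, ⟨t, ht, hy⟩ => by
      obtain ⟨c, hc0, hcy⟩ := coneMem_extract f l _ hy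
      refine ⟨Fin.cons t c, ?_, ?_⟩
      · intro k
        refine Fin.cases ?_ ?_ k
        · simpa using ht
        · intro j; simpa using hc0 j
      · simp only [List.length_cons]
        rw [Fin.sum_univ_succ]
        simp only [Fin.cons_zero, Fin.cons_succ]
        have : y - t • f a = ∑ k, c k • f (l.get k) := hcy
        have h2 : y = t • f a + (y - t • f a) := by abel
        rw [h2, this]
        rfl

/-! ### Pathways realizing nonnegative integer combinations of reactions -/

/-- Net change of a list of reactions. -/
def netd (l : List ((S → ℝ) × (S → ℝ))) : S → ℝ := (l.map fun r => r.2 - r.1).sum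

lemma exists_pathway (R : Finset ((S → ℝ) × (S → ℝ))) :
    ∀ (l : List ((S → ℝ) × (S → ℝ))), (∀ r ∈ l, r ∈ R) →
      ∃ z : S → ℝ, ∀ y : S → ℝ, (∀ i, z i ≤ y i) → Pathway R y (y + netd l)
  | [], _ => ⟨0, fun y _ => by
      have : y + netd ([] : List ((S → ℝ) × (S → ℝ))) = y := by simp [netd]
      rw [this]
      exact Relation.ReflTransGen.refl⟩
  | r :: l, hl => by
      obtain ⟨z', hz'⟩ := exists_pathway R l fun x hx => hl x (List.mem_cons_of_mem _ hx)
      refine ⟨fun i => max (r.1 i) (z' i + r.1 i - r.2 i), fun y hy => ?_⟩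
      have hstep : Dilution R y (y + (r.2 - r.1)) := by
        refine ⟨r, hl r List.mem_cons_self, y - r.1, ?_, by abel, by abel⟩
        intro i
        have := (le_max_left (r.1 i) (z' i + r.1 i - r.2 i)).trans (hy i)
        simp only [Pi.sub_apply]
        linarith
      have htail : Pathway R (y + (r.2 - r.1)) (y + (r.2 - r.1) + netd l) := by
        refine hz' _ fun i => ?_
        have := (le_max_right (r.1 i) (z' i + r.1 i - r.2 i)).trans (hy i)
        simp only [Pi.add_apply, Pi.sub_apply]
        linarith
      have hnet : y + netd (r :: l) = y + (r.2 - r.1) + netd l := by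
        simp only [netd, List.map_cons, List.sum_cons]; abel
      rw [hnet]
      exact Relation.ReflTransGen.head hstep htail

lemma sum_flatMap' {α : Type*} {M : Type*} [AddCommMonoid M] (f : α → List M) :
    ∀ l : List α, (l.flatMap f).sum = (l.map fun a => (f a).sum).sum
  | [] => by simp
  | a :: l => by
      simp only [List.flatMap_cons, List.sum_append, List.map_cons, List.sum_cons,
        sum_flatMap' f l]

lemma netd_flatMap_replicate (l : List ((S → ℝ) × (S → ℝ))) (n : Fin l.length → ℕ) :
    netd ((List.finRange l.length).flatMap fun k => List.replicate (n k) (l.get k)) =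
      ∑ k, (n k) • ((l.get k).2 - (l.get k).1) := by
  rw [netd, Fin.sum_univ_def, List.map_flatMap, sum_flatMap']
  simp [Function.comp_def, List.map_replicate, List.sum_replicate]

/-! ### Rounding a real conic combination to a natural one -/

lemma round_combo {m : ℕ} (g : Fin m → (S → ℝ)) (c : Fin m → ℝ) (hc : ∀ k, 0 ≤ c k)
    (T : Set S) (h1 : ∀ i ∈ T, 1 ≤ (∑ k, c k • g k) i) :
    ∃ n : Fin m → ℕ, ∀ i ∈ T, 0 < (∑ k, (n k : ℝ) • g k) i := by
  set M : ℝ := ∑ k, ∑ j, |g k j| with hM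
  obtain ⟨N, hN⟩ := exists_nat_gt M
  refine ⟨fun k => ⌈(N : ℝ) * c k⌉₊, fun i hi => ?_⟩
  have key : ∀ k, (N : ℝ) * (c k * g k i) - |g k i| ≤ (⌈(N : ℝ) * c k⌉₊ : ℝ) * g k i := by
    intro k
    have h0 : (0:ℝ) ≤ (N : ℝ) * c k := mul_nonneg (Nat.cast_nonneg N) (hc k)
    have hle : (N : ℝ) * c k ≤ (⌈(N : ℝ) * c k⌉₊ : ℝ) := Nat.le_ceil _
    have hlt : ((⌈(N : ℝ) * c k⌉₊ : ℝ)) < (N : ℝ) * c k + 1 := Nat.ceil_lt_add_one h0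
    rcases le_or_gt 0 (g k i) with hg | hg
    · have habs : |g k i| = g k i := abs_of_nonneg hg
      nlinarith
    · have habs : |g k i| = -(g k i) := abs_of_neg hg
      nlinarith
  have hMi : ∑ k, |g k i| ≤ M := by
    refine Finset.sum_le_sum fun k _ => ?_
    exact Finset.single_le_sum (f := fun j => |g k j|) (fun j _ => abs_nonneg _) (Finset.mem_univ i)
  have hsum : (N : ℝ) * (∑ k, c k • g k) i - ∑ k, |g k i| ≤ (∑ k, (⌈(N : ℝ) * c k⌉₊ : ℝ) • g k) i := by
    simp only [Finset.sum_apply, Pi.smul_apply, smul_eq_mul, Finset.mul_sum]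
    rw [← Finset.sum_sub_distrib]
    exact Finset.sum_le_sum fun k _ => key k
  have h1i : 1 ≤ (∑ k, c k • g k) i := h1 i hi
  have : (N : ℝ) * 1 - M ≤ (∑ k, (⌈(N : ℝ) * c k⌉₊ : ℝ) • g k) i := by
    have hN0 : (0:ℝ) ≤ N := Nat.cast_nonneg N
    nlinarith
  have : (0:ℝ) < (∑ k, (⌈(N : ℝ) * c k⌉₊ : ℝ) • g k) i := by linarith
  exact this

/-! ### The main alternative -/

lemma main_alt (R : Finset ((S → ℝ) × (S → ℝ))) (T : Set S) (s : ℝ) :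
    (∃ y y' : S → ℝ, Pathway R y y' ∧ ∀ i ∈ T, 0 < s * (y' i - y i)) ∨
    (∃ w : S → ℝ, (∀ i, 0 ≤ w i) ∧ (∀ i, w i ≠ 0 → i ∈ T) ∧ w ≠ 0 ∧
      ∀ r ∈ R, s * (∑ i, w i * (r.2 i - r.1 i)) ≤ 0) := by
  classical
  set g : ((S → ℝ) × (S → ℝ)) → (S → ℝ) :=
    fun r i => if i ∈ T then s * (r.2 i - r.1 i) else 0 with hgdef
  set negE : S → (S → ℝ) := fun i j => if j = i then (-1 : ℝ) else 0 with hnegE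
  set L : List (S → ℝ) :=
    R.toList.map g ++ (Finset.univ.filter (· ∈ T)).toList.map negE with hL
  set b : S → ℝ := fun i => if i ∈ T then (1 : ℝ) else 0 with hb
  rcases farkas L.length L rfl b with h | ⟨w, hw, hwb⟩
  · -- cone membership: produce a pathway
    left
    obtain ⟨y, hy1, hy2⟩ := coneMem_append h
    have hyT : ∀ i ∈ T, 1 ≤ y i := by
      intro i hi
      have hcoord : (b - y) i ≤ 0 := by
        refine coneMem_coord_le ?_ hy2
        intro a ha
        obtain ⟨j, hj, rfl⟩ := List.mem_map.mp ha
        simp only [hnegE]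
        split <;> norm_num
      simp only [Pi.sub_apply, hb, if_pos hi] at hcoord
      linarith
    obtain ⟨c, hc0, hcy⟩ := coneMem_extract g R.toList y hy1
    have h1 : ∀ i ∈ T, 1 ≤ (∑ k, c k • g (R.toList.get k)) i := by
      intro i hi; rw [← hcy]; exact hyT i hi
    obtain ⟨n, hn⟩ := round_combo _ c hc0 T h1
    set l' := (List.finRange R.toList.length).flatMap
      fun k => List.replicate (n k) (R.toList.get k) with hl'
    have hl'R : ∀ r ∈ l', r ∈ R := by
      intro r hr
      obtain ⟨k, _, hk2⟩ := List.mem_flatMap.mp hr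
      rw [List.eq_of_mem_replicate hk2]
      exact Finset.mem_toList.mp (R.toList.get_mem k)
    obtain ⟨z, hz⟩ := exists_pathway R l' hl'R
    refine ⟨z, z + netd l', hz z fun i => le_refl _, ?_⟩
    intro i hi
    have hni := hn i hi
    have hrw : (∑ k, ((n k : ℝ)) • g (R.toList.get k)) i = s * netd l' i := by
      rw [hl', netd_flatMap_replicate]
      simp only [Finset.sum_apply, Pi.smul_apply, smul_eq_mul, hgdef, if_pos hi,
        Pi.sub_apply, Finset.mul_sum, nsmul_eq_mul, Pi.natCast_apply, Pi.mul_apply]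
      exact Finset.sum_congr rfl fun k _ => by ring
    rw [hrw] at hni
    simpa using hni
  · -- separating vector: produce the certificate
    right
    set w' : S → ℝ := fun i => if i ∈ T then w i else 0 with hw'
    have hmemg : ∀ r ∈ R, g r ∈ L := by
      intro r hr
      exact List.mem_append_left _ (List.mem_map_of_mem (f := g) (Finset.mem_toList.mpr hr))
    have hmemE : ∀ i ∈ T, negE i ∈ L := by
      intro i hi
      refine List.mem_append_right _ (List.mem_map_of_mem (f := negE) ?_)
      exact Finset.mem_toList.mpr (Finset.mem_filter.mpr ⟨Finset.mem_univ i, hi⟩)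
    have hw'0 : ∀ i, 0 ≤ w' i := by
      intro i
      simp only [hw']
      split
      · rename_i hi
        have := hw _ (hmemE i hi)
        have hdot : dotp w (negE i) = -w i := by
          simp only [dotp, hnegE, mul_ite, mul_neg_one, mul_zero]
          rw [Finset.sum_ite_eq' Finset.univ i (fun j => -w j)]
          simp
        rw [hdot] at this
        linarith
      · exact le_refl _
    have hsupp : ∀ i, w' i ≠ 0 → i ∈ T := by
      intro i hi
      by_contra hc
      simp only [hw', if_neg hc] at hi
      exact hi rfl
    have hdotb : dotp w b = ∑ i, w' i := by
      simp only [dotp, hb, hw', mul_ite, mul_one, mul_zero]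
    have hne : w' ≠ 0 := by
      intro hzero
      rw [hdotb, hzero] at hwb
      simp at hwb
    refine ⟨w', hw'0, hsupp, hne, ?_⟩
    intro r hr
    have hle := hw _ (hmemg r hr)
    have : dotp w (g r) = s * ∑ i, w' i * (r.2 i - r.1 i) := by
      simp only [dotp, hgdef, hw', mul_ite, mul_zero, ite_mul, zero_mul, Finset.mul_sum]
      exact Finset.sum_congr rfl fun i _ => by split <;> ring
    rw [this] at hle
    exact hle

/-! ### Support lemmas -/

lemma supp_siphon (R : Finset ((S → ℝ) × (S → ℝ))) (hpos : PositiveNetwork R)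
    (u : S → ℝ) (hu0 : ∀ i, 0 ≤ u i)
    (hule : ∀ r ∈ R, ∑ i, u i * (r.2 i - r.1 i) ≤ 0) :
    IsSiphon R {i | u i ≠ 0} := by
  rintro r hr ⟨k, hk, hk2⟩
  have huk : 0 < u k := (hu0 k).lt_of_ne' hk
  have hr2k : 0 < r.2 k := ((hpos r hr).2 k).lt_of_ne' hk2
  have h2 : 0 < ∑ i, u i * r.2 i :=
    Finset.sum_pos' (fun i _ => mul_nonneg (hu0 i) ((hpos r hr).2 i))
      ⟨k, Finset.mem_univ k, mul_pos huk hr2k⟩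
  have h1 : ∑ i, u i * r.2 i - ∑ i, u i * r.1 i ≤ 0 := by
    have := hule r hr
    rwa [show (fun i => u i * (r.2 i - r.1 i)) = fun i => u i * r.2 i - u i * r.1 i from
      funext fun i => by ring, Finset.sum_sub_distrib] at this
  by_contra hcon
  push_neg at hcon
  have hz : ∀ i, u i * r.1 i = 0 := by
    intro i
    by_cases hui : u i = 0
    · rw [hui, zero_mul]
    · rw [hcon i hui, mul_zero]
  have : ∑ i, u i * r.1 i = 0 := Finset.sum_eq_zero fun i _ => hz i
  linarith

lemma critical_mono {R : Finset ((S → ℝ) × (S → ℝ))} {T T' : Set S}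
    (h : IsCritical R T) (hsub : T' ⊆ T) : IsCritical R T' := by
  rintro ⟨w, h1, h2, h3, h4⟩
  exact h ⟨w, h1, h2, fun i hi => hsub (h3 i hi), h4⟩

/-- Every minimal critical siphon of a positive reaction network is drainable or
self-replicable. -/
theorem stmt14 (R : Finset ((S → ℝ) × (S → ℝ))) (hpos : PositiveNetwork R)
    (T : Set S) (hne : T.Nonempty) (hsiphon : IsSiphon R T) (hcrit : IsCritical R T)
    (hmin : ∀ T' ⊆ T, T'.Nonempty → IsSiphon R T' → IsCritical R T' → T' = T) :
    Drainable R T ∨ SelfReplicable R T := by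
  classical
  rcases main_alt R T 1 with ⟨y, y', hp, hgt⟩ | ⟨w, hw0, hwT, hwne, hwle⟩
  · exact Or.inr ⟨y, y', hp, fun i hi => by have := hgt i hi; linarith⟩
  rcases main_alt R T (-1) with ⟨y, y', hp, hgt⟩ | ⟨v, hv0, hvT, hvne, hvge⟩
  · exact Or.inl ⟨y, y', hp, fun i hi => by have := hgt i hi; linarith⟩
  exfalso
  have hwle' : ∀ r ∈ R, ∑ i, w i * (r.2 i - r.1 i) ≤ 0 := by
    intro r hr; have := hwle r hr; linarith
  have hvge' : ∀ r ∈ R, 0 ≤ ∑ i, v i * (r.2 i - r.1 i) := by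
    intro r hr; have := hvge r hr; linarith
  -- the support of `w` is all of `T`
  have hwsupp : {i | w i ≠ 0} = T := by
    refine hmin _ (fun i hi => hwT i hi) (Function.ne_iff.mp hwne)
      (supp_siphon R hpos w hw0 hwle') (critical_mono hcrit fun i hi => hwT i hi)
  have hwpos : ∀ i ∈ T, 0 < w i := by
    intro i hi
    have : i ∈ {i | w i ≠ 0} := hwsupp ▸ hi
    exact (hw0 i).lt_of_ne' this
  -- the minimal ratio
  set F : Finset S := Finset.univ.filter (fun i => v i ≠ 0) with hF
  have hFne : F.Nonempty := by
    obtain ⟨i, hi⟩ := Function.ne_iff.mp hvne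
    exact ⟨i, Finset.mem_filter.mpr ⟨Finset.mem_univ i, hi⟩⟩
  have hvposF : ∀ i ∈ F, 0 < v i := fun i hi =>
    (hv0 i).lt_of_ne' (Finset.mem_filter.mp hi).2
  set ε : ℝ := F.inf' hFne (fun i => w i / v i) with hε
  obtain ⟨i₀, hi₀F, hi₀⟩ := Finset.exists_mem_eq_inf' hFne (fun i => w i / v i)
  have hi₀T : i₀ ∈ T := hvT i₀ (Finset.mem_filter.mp hi₀F).2
  have hεpos : 0 < ε := by
    rw [hε, hi₀]
    exact div_pos (hwpos i₀ hi₀T) (hvposF i₀ hi₀F)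
  set u : S → ℝ := fun i => w i - ε * v i with hu
  have hu0 : ∀ i, 0 ≤ u i := by
    intro i
    by_cases hvi : v i = 0
    · simp [hu, hvi, hw0 i]
    · have hiF : i ∈ F := Finset.mem_filter.mpr ⟨Finset.mem_univ i, hvi⟩
      have h1 : ε ≤ w i / v i := Finset.inf'_le _ hiF
      have h2 : 0 < v i := hvposF i hiF
      have : ε * v i ≤ w i := by
        rw [div_eq_mul_inv] at h1
        calc ε * v i ≤ (w i * (v i)⁻¹) * v i := by nlinarith
          _ = w i := by field_simp
      simp only [hu]; linarith
  have hui₀ : u i₀ = 0 := by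
    have hvi₀ : v i₀ ≠ 0 := (Finset.mem_filter.mp hi₀F).2
    simp only [hu, hε, hi₀]
    field_simp; ring
  have husupp : ∀ i, u i ≠ 0 → i ∈ T := by
    intro i hi
    by_cases hvi : v i = 0
    · apply hwT
      simpa [hu, hvi] using hi
    · exact hvT i hvi
  have hule : ∀ r ∈ R, ∑ i, u i * (r.2 i - r.1 i) ≤ 0 := by
    intro r hr
    have hsplit : ∑ i, u i * (r.2 i - r.1 i)
        = ∑ i, w i * (r.2 i - r.1 i) - ε * ∑ i, v i * (r.2 i - r.1 i) := by
      rw [Finset.mul_sum, ← Finset.sum_sub_distrib]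
      exact Finset.sum_congr rfl fun i _ => by simp only [hu]; ring
    rw [hsplit]
    have h1 := hwle' r hr
    have h2 := hvge' r hr
    nlinarith
  by_cases huz : u = 0
  · -- `w` is a conservation vector: contradicts criticality
    refine hcrit ⟨w, hwne, hw0, hwT, fun r hr => ?_⟩
    have hwv : ∀ i, w i = ε * v i := by
      intro i
      have := congrFun huz i
      simp only [hu, Pi.zero_apply] at this
      linarith
    have : ∑ i, w i * (r.2 i - r.1 i) = ε * ∑ i, v i * (r.2 i - r.1 i) := by
      rw [Finset.mul_sum]
      exact Finset.sum_congr rfl fun i _ => by rw [hwv i]; ring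
    have h2 := hvge' r hr
    have h1 := hwle' r hr
    nlinarith [this]
  · -- the support of `u` is a smaller siphon: contradicts minimality
    have hus : {i | u i ≠ 0} = T :=
      hmin _ husupp (Function.ne_iff.mp huz) (supp_siphon R hpos u hu0 hule)
        (critical_mono hcrit husupp)
    have : u i₀ ≠ 0 := by
      have : i₀ ∈ {i | u i ≠ 0} := hus ▸ hi₀T
      exact this
    exact this hui₀
end

section
/- In a chemical reaction network G, if y →*_G y' is a reaction pathway, then the fractional parts agree: y - ⌊y⌋ = y' - ⌊y'⌋, and moreover there is a reaction pathway ⌊y⌋ →*_G ⌊y'⌋. -/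
open Finset

variable {S : Type*} [Fintype S]

/-- In a chemical reaction network, fractional parts are invariant along reaction pathways, and
the coordinatewise floors are themselves connected by a reaction pathway. -/
theorem stmt15 (R : Finset ((S → ℝ) × (S → ℝ)))
    (hchem : ∀ r ∈ R, (∀ i, ∃ m : ℕ, r.1 i = m) ∧ (∀ i, ∃ m : ℕ, r.2 i = m))
    (y y' : S → ℝ) (h : Pathway R y y') :
    (∀ i, y i - ⌊y i⌋ = y' i - ⌊y' i⌋) ∧
    Pathway R (fun i => (⌊y i⌋ : ℝ)) (fun i => (⌊y' i⌋ : ℝ)) := by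
  have step : ∀ a b : S → ℝ, Dilution R a b →
      (∀ i, a i - ⌊a i⌋ = b i - ⌊b i⌋) ∧
      Dilution R (fun i => (⌊a i⌋ : ℝ)) (fun i => (⌊b i⌋ : ℝ)) := by
    rintro a b ⟨r, hr, w, hw, ha, hb⟩
    obtain ⟨h1, h2⟩ := hchem r hr
    have fa : ∀ i, (⌊a i⌋ : ℝ) = r.1 i + ⌊w i⌋ := by
      intro i
      obtain ⟨m, hm⟩ := h1 i
      have : a i = (m : ℤ) + w i := by simp [ha, hm]
      rw [this, Int.floor_intCast_add]
      push_cast; rw [hm]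
    have fb : ∀ i, (⌊b i⌋ : ℝ) = r.2 i + ⌊w i⌋ := by
      intro i
      obtain ⟨m, hm⟩ := h2 i
      have : b i = (m : ℤ) + w i := by simp [hb, hm]
      rw [this, Int.floor_intCast_add]
      push_cast; rw [hm]
    constructor
    · intro i
      have := fa i; have := fb i
      simp only [ha, hb, Pi.add_apply] at *
      linarith
    · exact ⟨r, hr, fun i => (⌊w i⌋ : ℝ), fun i => by simpa using Int.floor_nonneg.mpr (hw i),
        funext fun i => fa i, funext fun i => fb i⟩
  induction h with
  | refl => exact ⟨fun i => rfl, Relation.ReflTransGen.refl⟩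
  | tail _ hbc ih =>
      obtain ⟨ih1, ih2⟩ := ih
      obtain ⟨s1, s2⟩ := step _ _ hbc
      exact ⟨fun i => (ih1 i).trans (s1 i), ih2.tail s2⟩
end

section
/- For the reaction network with species {X, Y} and reactions X → 2Y and 2X → Y, the set {X, Y} is a critical siphon but is neither self-replicable nor drainable. -/
open Finset

variable {S : Type*} [Fintype S]

noncomputable instance : DecidableEq ((Fin 2 → ℝ) × (Fin 2 → ℝ)) := Classical.decEq _

/-- The reaction network with reactions `X → 2Y` and `2X → Y`. -/
noncomputable def R18 : Finset ((Fin 2 → ℝ) × (Fin 2 → ℝ)) :=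
  {(![1, 0], ![0, 2]), (![2, 0], ![0, 1])}

lemma dil18 {y y' : Fin 2 → ℝ} (h : Dilution R18 y y') : y' 0 ≤ y 0 ∧ y 1 ≤ y' 1 := by
  obtain ⟨r, hr, w, hw, hy, hy'⟩ := h
  subst hy hy'
  simp only [R18, Finset.mem_insert, Finset.mem_singleton] at hr
  rcases hr with h | h <;> subst h <;>
    refine ⟨?_, ?_⟩ <;> simp [Matrix.cons_val_zero, Matrix.cons_val_one]

lemma path18 {y y' : Fin 2 → ℝ} (h : Pathway R18 y y') : y' 0 ≤ y 0 ∧ y 1 ≤ y' 1 := by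
  induction h with
  | refl => exact ⟨le_refl _, le_refl _⟩
  | tail _ hd ih => exact ⟨(dil18 hd).1.trans ih.1, ih.2.trans (dil18 hd).2⟩

/-- For the network `X → 2Y`, `2X → Y`, the set `{X, Y}` is a critical siphon but is neither
self-replicable nor drainable. -/
theorem stmt18 :
    IsSiphon R18 Set.univ ∧ IsCritical R18 Set.univ ∧
    ¬ SelfReplicable R18 Set.univ ∧ ¬ Drainable R18 Set.univ := by
  refine ⟨?_, ?_, ?_, ?_⟩
  · intro r hr _
    simp only [R18, Finset.mem_insert, Finset.mem_singleton] at hr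
    rcases hr with h | h <;> subst h <;> exact ⟨0, Set.mem_univ _, by norm_num⟩
  · rintro ⟨w, hw0, hwpos, -, hcons⟩
    have h1 := hcons (![1, 0], ![0, 2]) (by simp [R18])
    have h2 := hcons (![2, 0], ![0, 1]) (by simp [R18])
    simp [Fin.sum_univ_two] at h1 h2
    apply hw0
    funext i
    fin_cases i <;> simp <;> linarith
  · rintro ⟨y, y', hp, hlt⟩
    exact absurd (hlt 0 (Set.mem_univ _)) (not_lt.2 (path18 hp).1)
  · rintro ⟨y, y', hp, hlt⟩
    exact absurd (hlt 1 (Set.mem_univ _)) (not_lt.2 (path18 hp).2)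
end
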